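/- arXiv:2407.04148 — 4 statements merged into one kernel-verified Lean document; each statement's English description precedes it below -/
import Mathlib

section
/- Let λ₀, μ₀, ρ₀ > 0, 0 < ν < 1, V > 0, α ∈ ℝ \ {0}, and s ∈ ℂ. Let ũ₁, ũ₂ : (0,∞) → ℂ be twice differentiable and f̃₁, f̃₂ : (0,∞) → ℂ satisfy, for all y > 0: μ₀(ũ₁''(y) + (ν/y)ũ₁'(y)) − (λ₀+2μ₀−ρ₀V²)α²ũ₁(y) − (λ₀+μ₀)iα ũ₂'(y) − (μ₀ν iα/y) ũ₂(y) + ρ₀ f̃₁(y) = 0 and (λ₀+2μ₀)(ũ₂''(y) + (ν/y)ũ₂'(y)) − (μ₀−ρ₀V²)α²ũ₂(y) − (λ₀+μ₀)iα ũ₁'(y) − (λ₀ν iα/y) ũ₁(y) + ρ₀ f̃₂(y) = 0. Assume, for j = 1, 2, that y ↦ ũ_j(y)y^{σ−1} is integrable on (0,∞) for σ ∈ {s, s−1, s−2}, that y ↦ f̃_j(y)y^{s−1}, y ↦ ũ_j''(y)y^{s−1}, y ↦ ũ_j'(y)y^{s−1}, and y ↦ ũ_j'(y)y^{s−2} are integrable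 on (0,∞), and that y^{s−1}ũ_j'(y), y^{s−1}ũ_j(y), and y^{s−2}ũ_j(y) all tend to 0 as y → 0⁺ and as y → ∞. Writing û_j(σ) = ∫₀^∞ ũ_j(y) y^{σ−1} dy and f̂_j(s) = ∫₀^∞ f̃_j(y) y^{s−1} dy, one has α²(ρ₀V²−λ₀−2μ₀) û₁(s) + iα[(λ₀+μ₀)(s−1) − μ₀ν] û₂(s−1) + μ₀(s−2)(s−1−ν) û₁(s−2) = −ρ₀ f̂₁(s) and α²(ρ₀V²−μ₀) û₂(s) + iα[(λ₀+μ₀)(s−1) − λ₀ν] û₁(s−1) + (λ₀+2μ₀)(s−2)(s−1−ν) û₂(s−2) = −ρ₀ f̂₂(s). -/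
open MeasureTheory Filter Set Complex



lemma aux_hasDerivAt_cpow (σ : ℂ) {y : ℝ} (hy : 0 < y) :
    HasDerivAt (fun t : ℝ => (t : ℂ) ^ σ) (σ * (y : ℂ) ^ (σ - 1)) y := by
  rcases eq_or_ne σ 0 with rfl | hσ
  · have h1 : (fun t : ℝ => (t : ℂ) ^ (0 : ℂ)) = fun _ => (1 : ℂ) := by
      funext t; simp
    rw [h1]
    simpa using hasDerivAt_const y (1 : ℂ)
  · have hne : σ - 1 ≠ -1 := by
      intro h
      apply hσ
      have := congrArg (· + 1) h
      simpa using this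
    have h := (hasDerivAt_ofReal_cpow_const' hy.ne' hne).const_mul σ
    have h2 : σ - 1 + 1 = σ := by ring
    rw [h2] at h
    have h3 : (fun t : ℝ => σ * ((t : ℂ) ^ σ / σ)) = fun t : ℝ => (t : ℂ) ^ σ := by
      funext t; field_simp
    rwa [h3] at h

lemma mellin_ibp (g : ℝ → ℂ) (σ τ : ℂ) (hτ : σ - 1 = τ)
    (hg : ∀ y ∈ Set.Ioi (0 : ℝ), DifferentiableAt ℝ g y)
    (hi1 : IntegrableOn (fun y : ℝ => deriv g y * (y : ℂ) ^ σ) (Set.Ioi 0))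
    (hi2 : IntegrableOn (fun y : ℝ => g y * (y : ℂ) ^ τ) (Set.Ioi 0))
    (h0 : Tendsto (fun y : ℝ => (y : ℂ) ^ σ * g y) (nhdsWithin 0 (Set.Ioi 0)) (nhds 0))
    (htop : Tendsto (fun y : ℝ => (y : ℂ) ^ σ * g y) atTop (nhds 0)) :
    ∫ y in Set.Ioi (0 : ℝ), deriv g y * (y : ℂ) ^ σ
      = -σ * ∫ y in Set.Ioi (0 : ℝ), g y * (y : ℂ) ^ τ := by
  subst hτ
  have key := integral_Ioi_mul_deriv_eq_deriv_mul
    (u := fun y : ℝ => (y : ℂ) ^ σ) (u' := fun y : ℝ => σ * (y : ℂ) ^ (σ - 1))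
    (v := g) (v' := deriv g) (a := 0) (a' := 0) (b' := 0)
    (fun y hy => aux_hasDerivAt_cpow σ hy)
    (fun y hy => (hg y hy).hasDerivAt)
    (IntegrableOn.congr_fun hi1 (fun y _ => by simp [Pi.mul_apply]; ring) measurableSet_Ioi)
    (IntegrableOn.congr_fun (hi2.const_mul σ) (fun y _ => by simp [Pi.mul_apply]; ring) measurableSet_Ioi)
    h0 htop
  have h1 : ∫ y in Set.Ioi (0 : ℝ), deriv g y * (y : ℂ) ^ σ
      = ∫ y in Set.Ioi (0 : ℝ), (y : ℂ) ^ σ * deriv g y :=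
    setIntegral_congr_fun measurableSet_Ioi (fun y _ => mul_comm _ _)
  have h2 : ∫ y in Set.Ioi (0 : ℝ), σ * (y : ℂ) ^ (σ - 1) * g y
      = σ * ∫ y in Set.Ioi (0 : ℝ), g y * (y : ℂ) ^ (σ - 1) := by
    rw [← integral_const_mul]
    exact setIntegral_congr_fun measurableSet_Ioi (fun y _ => by ring)
  rw [h1, key, h2]
  ring

lemma mellin_key (nu p c1 c2 c3 r : ℂ) (s : ℂ) (u v f : ℝ → ℂ)
    (hdu : ∀ y ∈ Set.Ioi (0 : ℝ), DifferentiableAt ℝ u y)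
    (hdu' : ∀ y ∈ Set.Ioi (0 : ℝ), DifferentiableAt ℝ (deriv u) y)
    (hdv : ∀ y ∈ Set.Ioi (0 : ℝ), DifferentiableAt ℝ v y)
    (hode : ∀ y : ℝ, 0 < y →
      p * (deriv (deriv u) y + (nu / (y : ℂ)) * deriv u y)
        - c1 * u y - c2 * deriv v y - c3 / (y : ℂ) * v y + r * f y = 0)
    (hu_s : IntegrableOn (fun y : ℝ => u y * (y : ℂ) ^ (s - 1)) (Set.Ioi 0))
    (hu_s3 : IntegrableOn (fun y : ℝ => u y * (y : ℂ) ^ (s - 3)) (Set.Ioi 0))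
    (hv_s2 : IntegrableOn (fun y : ℝ => v y * (y : ℂ) ^ (s - 2)) (Set.Ioi 0))
    (hf : IntegrableOn (fun y : ℝ => f y * (y : ℂ) ^ (s - 1)) (Set.Ioi 0))
    (hu'' : IntegrableOn (fun y : ℝ => deriv (deriv u) y * (y : ℂ) ^ (s - 1)) (Set.Ioi 0))
    (hu'a : IntegrableOn (fun y : ℝ => deriv u y * (y : ℂ) ^ (s - 2)) (Set.Ioi 0))
    (hv'a : IntegrableOn (fun y : ℝ => deriv v y * (y : ℂ) ^ (s - 1)) (Set.Ioi 0))
    (lu'0 : Tendsto (fun y : ℝ => (y : ℂ) ^ (s - 1) * deriv u y) (nhdsWithin 0 (Set.Ioi 0)) (nhds 0))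
    (lu't : Tendsto (fun y : ℝ => (y : ℂ) ^ (s - 1) * deriv u y) atTop (nhds 0))
    (luc0 : Tendsto (fun y : ℝ => (y : ℂ) ^ (s - 2) * u y) (nhdsWithin 0 (Set.Ioi 0)) (nhds 0))
    (luct : Tendsto (fun y : ℝ => (y : ℂ) ^ (s - 2) * u y) atTop (nhds 0))
    (lvb0 : Tendsto (fun y : ℝ => (y : ℂ) ^ (s - 1) * v y) (nhdsWithin 0 (Set.Ioi 0)) (nhds 0))
    (lvbt : Tendsto (fun y : ℝ => (y : ℂ) ^ (s - 1) * v y) atTop (nhds 0)) :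
    (-c1) * (∫ y in Set.Ioi (0 : ℝ), u y * (y : ℂ) ^ (s - 1))
      + (c2 * (s - 1) - c3) * (∫ y in Set.Ioi (0 : ℝ), v y * (y : ℂ) ^ (s - 2))
      + p * (s - 2) * (s - 1 - nu) * (∫ y in Set.Ioi (0 : ℝ), u y * (y : ℂ) ^ (s - 3))
      = -r * ∫ y in Set.Ioi (0 : ℝ), f y * (y : ℂ) ^ (s - 1) := by
  -- IBP identities
  have E2 : ∫ y in Set.Ioi (0 : ℝ), deriv u y * (y : ℂ) ^ (s - 2)
      = -(s - 2) * ∫ y in Set.Ioi (0 : ℝ), u y * (y : ℂ) ^ (s - 3) :=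
    mellin_ibp u (s - 2) (s - 3) (by ring) hdu hu'a hu_s3 luc0 luct
  have E3 : ∫ y in Set.Ioi (0 : ℝ), deriv (deriv u) y * (y : ℂ) ^ (s - 1)
      = -(s - 1) * ∫ y in Set.Ioi (0 : ℝ), deriv u y * (y : ℂ) ^ (s - 2) :=
    mellin_ibp (deriv u) (s - 1) (s - 2) (by ring) hdu' hu'' hu'a lu'0 lu't
  have E1 : ∫ y in Set.Ioi (0 : ℝ), deriv v y * (y : ℂ) ^ (s - 1)
      = -(s - 1) * ∫ y in Set.Ioi (0 : ℝ), v y * (y : ℂ) ^ (s - 2) :=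
    mellin_ibp v (s - 1) (s - 2) (by ring) hdv hv'a hv_s2 lvb0 lvbt
  -- zero integral of the ODE multiplied by y^(s-1)
  have hzero : EqOn (fun y : ℝ =>
      p * (deriv (deriv u) y * (y : ℂ) ^ (s - 1))
        + (p * nu) * (deriv u y * (y : ℂ) ^ (s - 2))
        - c1 * (u y * (y : ℂ) ^ (s - 1))
        - c2 * (deriv v y * (y : ℂ) ^ (s - 1))
        - c3 * (v y * (y : ℂ) ^ (s - 2))
        + r * (f y * (y : ℂ) ^ (s - 1))) (fun _ => (0 : ℂ)) (Set.Ioi 0) := by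
    intro y hy
    have hy0 : (0 : ℝ) < y := hy
    have hyC : (y : ℂ) ≠ 0 := Complex.ofReal_ne_zero.mpr hy0.ne'
    have h := hode y hy0
    have hp2 : (y : ℂ) ^ (s - 2) = (y : ℂ) ^ (s - 1) / (y : ℂ) := by
      rw [show s - 1 = (s - 2) + 1 by ring, Complex.cpow_add _ _ hyC, Complex.cpow_one,
        mul_div_cancel_right₀ _ hyC]
    simp only
    rw [hp2]
    linear_combination ((y : ℂ) ^ (s - 1)) * h
  have h0 : (∫ y in Set.Ioi (0 : ℝ),
      (p * (deriv (deriv u) y * (y : ℂ) ^ (s - 1))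
        + (p * nu) * (deriv u y * (y : ℂ) ^ (s - 2))
        - c1 * (u y * (y : ℂ) ^ (s - 1))
        - c2 * (deriv v y * (y : ℂ) ^ (s - 1))
        - c3 * (v y * (y : ℂ) ^ (s - 2))
        + r * (f y * (y : ℂ) ^ (s - 1)))) = 0 := by
    rw [setIntegral_congr_fun measurableSet_Ioi hzero]
    simp
  have ia := hu''.const_mul p
  have ib := hu'a.const_mul (p * nu)
  have ic := hu_s.const_mul c1
  have id_ := hv'a.const_mul c2
  have ie := hv_s2.const_mul c3
  have if_ := hf.const_mul r
  have i2 : IntegrableOn (fun y : ℝ => p * (deriv (deriv u) y * (y : ℂ) ^ (s - 1))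
      + (p * nu) * (deriv u y * (y : ℂ) ^ (s - 2))) (Set.Ioi 0) := ia.add ib
  have i3 : IntegrableOn (fun y : ℝ => p * (deriv (deriv u) y * (y : ℂ) ^ (s - 1))
      + (p * nu) * (deriv u y * (y : ℂ) ^ (s - 2))
      - c1 * (u y * (y : ℂ) ^ (s - 1))) (Set.Ioi 0) := i2.sub ic
  have i4 : IntegrableOn (fun y : ℝ => p * (deriv (deriv u) y * (y : ℂ) ^ (s - 1))
      + (p * nu) * (deriv u y * (y : ℂ) ^ (s - 2))
      - c1 * (u y * (y : ℂ) ^ (s - 1))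
      - c2 * (deriv v y * (y : ℂ) ^ (s - 1))) (Set.Ioi 0) := i3.sub id_
  have i5 : IntegrableOn (fun y : ℝ => p * (deriv (deriv u) y * (y : ℂ) ^ (s - 1))
      + (p * nu) * (deriv u y * (y : ℂ) ^ (s - 2))
      - c1 * (u y * (y : ℂ) ^ (s - 1))
      - c2 * (deriv v y * (y : ℂ) ^ (s - 1))
      - c3 * (v y * (y : ℂ) ^ (s - 2))) (Set.Ioi 0) := i4.sub ie
  rw [integral_add i5 if_, integral_sub i4 ie, integral_sub i3 id_,
    integral_sub i2 ic, integral_add ia ib,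
    integral_const_mul, integral_const_mul, integral_const_mul, integral_const_mul,
    integral_const_mul, integral_const_mul] at h0
  rw [E1] at h0
  rw [E3, E2] at h0
  linear_combination h0


theorem mellin_of_fourier_system
    (lam0 mu0 rho0 nu V : ℝ) (hlam : 0 < lam0) (hmu : 0 < mu0) (hrho : 0 < rho0)
    (hnu0 : 0 < nu) (hnu1 : nu < 1) (hV : 0 < V)
    (α : ℝ) (hα : α ≠ 0) (s : ℂ)
    (u1 u2 f1 f2 : ℝ → ℂ)
    (hd1 : ∀ y ∈ Set.Ioi (0 : ℝ), DifferentiableAt ℝ u1 y)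
    (hd1' : ∀ y ∈ Set.Ioi (0 : ℝ), DifferentiableAt ℝ (deriv u1) y)
    (hd2 : ∀ y ∈ Set.Ioi (0 : ℝ), DifferentiableAt ℝ u2 y)
    (hd2' : ∀ y ∈ Set.Ioi (0 : ℝ), DifferentiableAt ℝ (deriv u2) y)
    (hode1 : ∀ y : ℝ, 0 < y →
      (mu0 : ℂ) * (deriv (deriv u1) y + ((nu : ℂ) / (y : ℂ)) * deriv u1 y)
        - ((lam0 : ℂ) + 2 * (mu0 : ℂ) - (rho0 : ℂ) * (V : ℂ) ^ 2) * (α : ℂ) ^ 2 * u1 y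
        - ((lam0 : ℂ) + (mu0 : ℂ)) * Complex.I * (α : ℂ) * deriv u2 y
        - (mu0 : ℂ) * (nu : ℂ) * Complex.I * (α : ℂ) / (y : ℂ) * u2 y
        + (rho0 : ℂ) * f1 y = 0)
    (hode2 : ∀ y : ℝ, 0 < y →
      ((lam0 : ℂ) + 2 * (mu0 : ℂ)) * (deriv (deriv u2) y + ((nu : ℂ) / (y : ℂ)) * deriv u2 y)
        - ((mu0 : ℂ) - (rho0 : ℂ) * (V : ℂ) ^ 2) * (α : ℂ) ^ 2 * u2 y
        - ((lam0 : ℂ) + (mu0 : ℂ)) * Complex.I * (α : ℂ) * deriv u1 y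
        - (lam0 : ℂ) * (nu : ℂ) * Complex.I * (α : ℂ) / (y : ℂ) * u1 y
        + (rho0 : ℂ) * f2 y = 0)
    (hint1 : ∀ σ ∈ ({s, s - 1, s - 2} : Set ℂ),
      IntegrableOn (fun y : ℝ => u1 y * (y : ℂ) ^ (σ - 1)) (Set.Ioi 0))
    (hint2 : ∀ σ ∈ ({s, s - 1, s - 2} : Set ℂ),
      IntegrableOn (fun y : ℝ => u2 y * (y : ℂ) ^ (σ - 1)) (Set.Ioi 0))
    (hintf1 : IntegrableOn (fun y : ℝ => f1 y * (y : ℂ) ^ (s - 1)) (Set.Ioi 0))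
    (hintf2 : IntegrableOn (fun y : ℝ => f2 y * (y : ℂ) ^ (s - 1)) (Set.Ioi 0))
    (hintd1'' : IntegrableOn (fun y : ℝ => deriv (deriv u1) y * (y : ℂ) ^ (s - 1)) (Set.Ioi 0))
    (hintd2'' : IntegrableOn (fun y : ℝ => deriv (deriv u2) y * (y : ℂ) ^ (s - 1)) (Set.Ioi 0))
    (hintd1a : IntegrableOn (fun y : ℝ => deriv u1 y * (y : ℂ) ^ (s - 1)) (Set.Ioi 0))
    (hintd2a : IntegrableOn (fun y : ℝ => deriv u2 y * (y : ℂ) ^ (s - 1)) (Set.Ioi 0))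
    (hintd1b : IntegrableOn (fun y : ℝ => deriv u1 y * (y : ℂ) ^ (s - 2)) (Set.Ioi 0))
    (hintd2b : IntegrableOn (fun y : ℝ => deriv u2 y * (y : ℂ) ^ (s - 2)) (Set.Ioi 0))
    (hlim1a0 : Tendsto (fun y : ℝ => (y : ℂ) ^ (s - 1) * deriv u1 y)
      (nhdsWithin 0 (Set.Ioi 0)) (nhds 0))
    (hlim1atop : Tendsto (fun y : ℝ => (y : ℂ) ^ (s - 1) * deriv u1 y) atTop (nhds 0))
    (hlim2a0 : Tendsto (fun y : ℝ => (y : ℂ) ^ (s - 1) * deriv u2 y)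
      (nhdsWithin 0 (Set.Ioi 0)) (nhds 0))
    (hlim2atop : Tendsto (fun y : ℝ => (y : ℂ) ^ (s - 1) * deriv u2 y) atTop (nhds 0))
    (hlim1b0 : Tendsto (fun y : ℝ => (y : ℂ) ^ (s - 1) * u1 y)
      (nhdsWithin 0 (Set.Ioi 0)) (nhds 0))
    (hlim1btop : Tendsto (fun y : ℝ => (y : ℂ) ^ (s - 1) * u1 y) atTop (nhds 0))
    (hlim2b0 : Tendsto (fun y : ℝ => (y : ℂ) ^ (s - 1) * u2 y)
      (nhdsWithin 0 (Set.Ioi 0)) (nhds 0))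
    (hlim2btop : Tendsto (fun y : ℝ => (y : ℂ) ^ (s - 1) * u2 y) atTop (nhds 0))
    (hlim1c0 : Tendsto (fun y : ℝ => (y : ℂ) ^ (s - 2) * u1 y)
      (nhdsWithin 0 (Set.Ioi 0)) (nhds 0))
    (hlim1ctop : Tendsto (fun y : ℝ => (y : ℂ) ^ (s - 2) * u1 y) atTop (nhds 0))
    (hlim2c0 : Tendsto (fun y : ℝ => (y : ℂ) ^ (s - 2) * u2 y)
      (nhdsWithin 0 (Set.Ioi 0)) (nhds 0))
    (hlim2ctop : Tendsto (fun y : ℝ => (y : ℂ) ^ (s - 2) * u2 y) atTop (nhds 0)) :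
    ((α : ℂ) ^ 2 * ((rho0 : ℂ) * (V : ℂ) ^ 2 - (lam0 : ℂ) - 2 * (mu0 : ℂ))
        * (∫ y in Set.Ioi (0 : ℝ), u1 y * (y : ℂ) ^ (s - 1))
      + Complex.I * (α : ℂ) * (((lam0 : ℂ) + (mu0 : ℂ)) * (s - 1) - (mu0 : ℂ) * (nu : ℂ))
        * (∫ y in Set.Ioi (0 : ℝ), u2 y * (y : ℂ) ^ (s - 2))
      + (mu0 : ℂ) * (s - 2) * (s - 1 - (nu : ℂ))
        * (∫ y in Set.Ioi (0 : ℝ), u1 y * (y : ℂ) ^ (s - 3))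
      = -(rho0 : ℂ) * ∫ y in Set.Ioi (0 : ℝ), f1 y * (y : ℂ) ^ (s - 1)) ∧
    ((α : ℂ) ^ 2 * ((rho0 : ℂ) * (V : ℂ) ^ 2 - (mu0 : ℂ))
        * (∫ y in Set.Ioi (0 : ℝ), u2 y * (y : ℂ) ^ (s - 1))
      + Complex.I * (α : ℂ) * (((lam0 : ℂ) + (mu0 : ℂ)) * (s - 1) - (lam0 : ℂ) * (nu : ℂ))
        * (∫ y in Set.Ioi (0 : ℝ), u1 y * (y : ℂ) ^ (s - 2))
      + ((lam0 : ℂ) + 2 * (mu0 : ℂ)) * (s - 2) * (s - 1 - (nu : ℂ))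
        * (∫ y in Set.Ioi (0 : ℝ), u2 y * (y : ℂ) ^ (s - 3))
      = -(rho0 : ℂ) * ∫ y in Set.Ioi (0 : ℝ), f2 y * (y : ℂ) ^ (s - 1)) := by
  have hu1_s2 : IntegrableOn (fun y : ℝ => u1 y * (y : ℂ) ^ (s - 2)) (Set.Ioi 0) := by
    have h := hint1 (s - 1) (by simp)
    rwa [show s - 1 - 1 = s - 2 by ring] at h
  have hu1_s3 : IntegrableOn (fun y : ℝ => u1 y * (y : ℂ) ^ (s - 3)) (Set.Ioi 0) := by
    have h := hint1 (s - 2) (by simp)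
    rwa [show s - 2 - 1 = s - 3 by ring] at h
  have hu2_s2 : IntegrableOn (fun y : ℝ => u2 y * (y : ℂ) ^ (s - 2)) (Set.Ioi 0) := by
    have h := hint2 (s - 1) (by simp)
    rwa [show s - 1 - 1 = s - 2 by ring] at h
  have hu2_s3 : IntegrableOn (fun y : ℝ => u2 y * (y : ℂ) ^ (s - 3)) (Set.Ioi 0) := by
    have h := hint2 (s - 2) (by simp)
    rwa [show s - 2 - 1 = s - 3 by ring] at h
  have G1 := mellin_key (nu : ℂ) (mu0 : ℂ)
    (((lam0 : ℂ) + 2 * (mu0 : ℂ) - (rho0 : ℂ) * (V : ℂ) ^ 2) * (α : ℂ) ^ 2)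
    (((lam0 : ℂ) + (mu0 : ℂ)) * Complex.I * (α : ℂ))
    ((mu0 : ℂ) * (nu : ℂ) * Complex.I * (α : ℂ)) (rho0 : ℂ) s u1 u2 f1
    hd1 hd1' hd2 hode1 (hint1 s (by simp)) hu1_s3 hu2_s2 hintf1 hintd1''
    hintd1b hintd2a hlim1a0 hlim1atop hlim1c0 hlim1ctop hlim2b0 hlim2btop
  have G2 := mellin_key (nu : ℂ) ((lam0 : ℂ) + 2 * (mu0 : ℂ))
    (((mu0 : ℂ) - (rho0 : ℂ) * (V : ℂ) ^ 2) * (α : ℂ) ^ 2)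
    (((lam0 : ℂ) + (mu0 : ℂ)) * Complex.I * (α : ℂ))
    ((lam0 : ℂ) * (nu : ℂ) * Complex.I * (α : ℂ)) (rho0 : ℂ) s u2 u1 f2
    hd2 hd2' hd1 hode2 (hint2 s (by simp)) hu2_s3 hu1_s2 hintf2 hintd2''
    hintd2b hintd1a hlim2a0 hlim2atop hlim2c0 hlim2ctop hlim1b0 hlim1btop
  constructor
  · linear_combination G1
  · linear_combination G2
end

section
/- In the notation of the context, let α ∈ ℝ \ {0} and let s ∈ ℂ be such that Γ(1−s/2), Γ(2−s/2), Γ((3−s)/2), Γ((s+1−ν)/2), Γ((s−ν)/2), and Γ((s−1−ν)/2) are all nonzero. Suppose complex numbers û₁(s), û₂(s), û₁(s−1), û₂(s−1), û₁(s−2), û₂(s−2), f̂₁(s), f̂₂(s) satisfy û₁(s) + i[(a_d²−a_s²)(s−1) − ν a_s²]/((1−a_d²)α) · û₂(s−1) + a_s²(s−2)(s−1−ν)/((1−a_d²)α²) · û₁(s−2) = −f̂₁(s)/((1−a_d²)V²α²) and û₂(s) + i[(a_d²−a_s²)(s−1) − ν(a_d²−2a_s²)]/((1−a_s²)α) ·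 û₁(s−1) + a_d²(s−2)(s−1−ν)/((1−a_s²)α²) · û₂(s−2) = −f̂₂(s)/((1−a_s²)V²α²). Define Φ_j(σ) = Γ(1−σ/2)|α|^σ/(Γ((σ+1−ν)/2)·2^σ·β_j^{σ/2}) · û_j(σ) for σ ∈ {s, s−1, s−2} and j = 1, 2, and set g₁(s) = |α|^{s−2}Γ(1−s/2) f̂₁(s)/(V²(a_d²−1)2^s β₁^{s/2} Γ((s+1−ν)/2)) and g₂(s) = |α|^{s−2}Γ(1−s/2) f̂₂(s)/(V²(a_s²−1)2^s β₂^{s/2} Γ((s+1−ν)/2)). Then Φ₁(s) − i·sgn(α)·G₁(s)·Φ₂(s−1) + Φ₁(s−2) = g₁(s) and Φ₂(s) − i·sgn(α)·G₂(s)·Φ₁(s−1) + Φ₂(s−2) = g₂(s). -/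
open MeasureTheory Filter Set Complex

noncomputable section

/-- a_d = c_d / V -/
def aD (cd V : ℝ) : ℝ := cd / V

/-- a_s = c_s / V -/
def aS (cs V : ℝ) : ℝ := cs / V

/-- β₁ = a_s² / (a_d² − 1) -/
def beta1 (cd cs V : ℝ) : ℝ := (aS cs V) ^ 2 / ((aD cd V) ^ 2 - 1)

/-- β₂ = a_d² / (a_s² − 1) -/
def beta2 (cd cs V : ℝ) : ℝ := (aD cd V) ^ 2 / ((aS cs V) ^ 2 - 1)

/-- b₁(s) = [(a_d²−a_s²)(s−1)−ν a_s²] / (2(a_d²−1) β₂^{(1−s)/2} β₁^{s/2}) -/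
def bb1 (nu cd cs V : ℝ) (s : ℂ) : ℂ :=
  ((((aD cd V) ^ 2 - (aS cs V) ^ 2 : ℝ) : ℂ) * (s - 1) - (nu : ℂ) * (((aS cs V) ^ 2 : ℝ) : ℂ)) /
    (2 * ((((aD cd V) ^ 2 - 1 : ℝ)) : ℂ) * ((beta2 cd cs V : ℝ) : ℂ) ^ ((1 - s) / 2)
      * ((beta1 cd cs V : ℝ) : ℂ) ^ (s / 2))

/-- b₂(s) = [(a_d²−a_s²)(s−1)−ν(a_d²−2a_s²)] / (2(a_s²−1) β₁^{(1−s)/2} β₂^{s/2}) -/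
def bb2 (nu cd cs V : ℝ) (s : ℂ) : ℂ :=
  ((((aD cd V) ^ 2 - (aS cs V) ^ 2 : ℝ) : ℂ) * (s - 1)
      - (nu : ℂ) * (((aD cd V) ^ 2 - 2 * (aS cs V) ^ 2 : ℝ) : ℂ)) /
    (2 * ((((aS cs V) ^ 2 - 1 : ℝ)) : ℂ) * ((beta1 cd cs V : ℝ) : ℂ) ^ ((1 - s) / 2)
      * ((beta2 cd cs V : ℝ) : ℂ) ^ (s / 2))

/-- G₁(s) = b₁(s)·Γ(1−s/2)Γ((s−ν)/2) / (Γ((s+1−ν)/2)Γ((3−s)/2)) -/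
def GG1 (nu cd cs V : ℝ) (s : ℂ) : ℂ :=
  bb1 nu cd cs V s * (Complex.Gamma (1 - s / 2) * Complex.Gamma ((s - (nu : ℂ)) / 2)) /
    (Complex.Gamma ((s + 1 - (nu : ℂ)) / 2) * Complex.Gamma ((3 - s) / 2))

/-- G₂(s) = b₂(s)·Γ(1−s/2)Γ((s−ν)/2) / (Γ((s+1−ν)/2)Γ((3−s)/2)) -/
def GG2 (nu cd cs V : ℝ) (s : ℂ) : ℂ :=
  bb2 nu cd cs V s * (Complex.Gamma (1 - s / 2) * Complex.Gamma ((s - (nu : ℂ)) / 2)) /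
    (Complex.Gamma ((s + 1 - (nu : ℂ)) / 2) * Complex.Gamma ((3 - s) / 2))

/-- Φ_j(σ) = Γ(1−σ/2)|α|^σ/(Γ((σ+1−ν)/2)·2^σ·β_j^{σ/2}) · û_j(σ) -/
def PhiFun (nu bj α : ℝ) (σ : ℂ) (v : ℂ) : ℂ :=
  Complex.Gamma (1 - σ / 2) * ((|α| : ℝ) : ℂ) ^ σ /
    (Complex.Gamma ((σ + 1 - (nu : ℂ)) / 2) * (2 : ℂ) ^ σ * ((bj : ℝ) : ℂ) ^ (σ / 2)) * v

set_option maxHeartbeats 1000000 in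
lemma aux_red (nu V d b1 b2 α : ℝ) (hα : α ≠ 0) (s : ℂ)
    (hV : V ≠ 0) (hd : d ≠ 0) (hb1 : b1 ≠ 0) (hb2 : b2 ≠ 0)
    (hΓ1 : Complex.Gamma (1 - s / 2) ≠ 0)
    (hΓ3 : Complex.Gamma ((3 - s) / 2) ≠ 0)
    (hΓ4 : Complex.Gamma ((s + 1 - (nu : ℂ)) / 2) ≠ 0)
    (hΓ5 : Complex.Gamma ((s - (nu : ℂ)) / 2) ≠ 0)
    (hΓ6 : Complex.Gamma ((s - 1 - (nu : ℂ)) / 2) ≠ 0)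
    (K u1s u2sm1 u1sm2 f1s : ℂ)
    (heq : u1s + Complex.I * K / (((-d : ℝ) : ℂ) * (α : ℂ)) * u2sm1
        + ((b1 * d : ℝ) : ℂ) * (s - 2) * (s - 1 - (nu : ℂ)) / (((-d : ℝ) : ℂ) * (α : ℂ) ^ 2) * u1sm2
      = -f1s / (((-d : ℝ) : ℂ) * (V : ℂ) ^ 2 * (α : ℂ) ^ 2)) :
    PhiFun nu b1 α s u1s
      - Complex.I * ((Real.sign α : ℝ) : ℂ)
          * (K / (2 * ((d : ℝ) : ℂ) * ((b2 : ℝ) : ℂ) ^ ((1 - s) / 2) * ((b1 : ℝ) : ℂ) ^ (s / 2))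
              * (Complex.Gamma (1 - s / 2) * Complex.Gamma ((s - (nu : ℂ)) / 2))
              / (Complex.Gamma ((s + 1 - (nu : ℂ)) / 2) * Complex.Gamma ((3 - s) / 2)))
          * PhiFun nu b2 α (s - 1) u2sm1
      + PhiFun nu b1 α (s - 2) u1sm2
    = ((|α| : ℝ) : ℂ) ^ (s - 2) * Complex.Gamma (1 - s / 2) * f1s
        / (((V ^ 2 * d : ℝ) : ℂ) * (2 : ℂ) ^ s * ((b1 : ℝ) : ℂ) ^ (s / 2)
          * Complex.Gamma ((s + 1 - (nu : ℂ)) / 2)) := by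
  have hαc : (α : ℂ) ≠ 0 := Complex.ofReal_ne_zero.mpr hα
  have hdc : (d : ℂ) ≠ 0 := Complex.ofReal_ne_zero.mpr hd
  have hVc : (V : ℂ) ≠ 0 := Complex.ofReal_ne_zero.mpr hV
  have hVdc : ((V ^ 2 * d : ℝ) : ℂ) ≠ 0 := by
    push_cast; exact mul_ne_zero (pow_ne_zero 2 hVc) hdc
  have hb1c : ((b1 : ℝ) : ℂ) ≠ 0 := Complex.ofReal_ne_zero.mpr hb1
  have hb2c : ((b2 : ℝ) : ℂ) ≠ 0 := Complex.ofReal_ne_zero.mpr hb2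
  have h1niz : (1 : ℂ) - s / 2 ≠ 0 := by
    intro h; exact hΓ1 (by rw [h, Complex.Gamma_zero])
  have h6niz : (s - 1 - (nu : ℂ)) / 2 ≠ 0 := by
    intro h; exact hΓ6 (by rw [h, Complex.Gamma_zero])
  have h6z : s - 1 - (nu : ℂ) ≠ 0 := by
    intro h; exact h6niz (by rw [h]; norm_num)
  have hGA : Complex.Gamma (1 - (s - 2) / 2) = (1 - s / 2) * Complex.Gamma (1 - s / 2) := by
    rw [show (1 : ℂ) - (s - 2) / 2 = (1 - s / 2) + 1 by ring, Complex.Gamma_add_one _ h1niz]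
  have hGB : Complex.Gamma ((s + 1 - (nu : ℂ)) / 2)
      = ((s - 1 - (nu : ℂ)) / 2) * Complex.Gamma ((s - 1 - (nu : ℂ)) / 2) := by
    rw [show (s + 1 - (nu : ℂ)) / 2 = (s - 1 - (nu : ℂ)) / 2 + 1 by ring,
      Complex.Gamma_add_one _ h6niz]
  have hGC : Complex.Gamma ((s - 2 + 1 - (nu : ℂ)) / 2)
      = Complex.Gamma ((s + 1 - (nu : ℂ)) / 2) / ((s - 1 - (nu : ℂ)) / 2) := by
    rw [show s - 2 + 1 - (nu : ℂ) = s - 1 - (nu : ℂ) by ring, hGB]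
    field_simp
  have hGD : Complex.Gamma (1 - (s - 1) / 2) = Complex.Gamma ((3 - s) / 2) := by
    rw [show (1 : ℂ) - (s - 1) / 2 = (3 - s) / 2 by ring]
  have hGE : Complex.Gamma ((s - 1 + 1 - (nu : ℂ)) / 2)
      = Complex.Gamma ((s - (nu : ℂ)) / 2) := by
    rw [show s - 1 + 1 - (nu : ℂ) = s - (nu : ℂ) by ring]
  have hP1 : ((b1 : ℝ) : ℂ) ^ ((s - 2) / 2) = ((b1 : ℝ) : ℂ) ^ (s / 2) / ((b1 : ℝ) : ℂ) := by
    rw [show (s - 2) / 2 = s / 2 - 1 by ring, Complex.cpow_sub _ _ hb1c, Complex.cpow_one]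
  have hP2 : ((b2 : ℝ) : ℂ) ^ ((1 - s) / 2) = (((b2 : ℝ) : ℂ) ^ ((s - 1) / 2))⁻¹ := by
    rw [show (1 - s) / 2 = -((s - 1) / 2) by ring, Complex.cpow_neg]
  have h2s1 : (2 : ℂ) ^ (s - 1) = 2 ^ s / 2 := by
    rw [Complex.cpow_sub _ _ two_ne_zero, Complex.cpow_one]
  have h2s2 : (2 : ℂ) ^ (s - 2) = 2 ^ s / 4 := by
    rw [Complex.cpow_sub _ _ two_ne_zero,
      show (2 : ℂ) ^ (2 : ℂ) = 4 by
        rw [show (2 : ℂ) = ((2 : ℕ) : ℂ) by norm_num, Complex.cpow_natCast]; norm_num]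
  have hQ : (2 : ℂ) ^ s ≠ 0 := by simp [Complex.cpow_eq_zero_iff]
  have hR1 : ((b1 : ℝ) : ℂ) ^ (s / 2) ≠ 0 := by simp [Complex.cpow_eq_zero_iff, hb1c]
  have hR2 : ((b2 : ℝ) : ℂ) ^ ((s - 1) / 2) ≠ 0 := by simp [Complex.cpow_eq_zero_iff, hb2c]
  push_cast at heq
  simp only [PhiFun]
  rcases hα.lt_or_gt with hneg | hpos
  · -- α < 0 : |α| = -α, sign = -1
    rw [abs_of_neg hneg, Real.sign_of_neg hneg]
    simp only [Complex.ofReal_neg, Complex.ofReal_one]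
    have hmαc : (-(α : ℂ)) ≠ 0 := neg_ne_zero.mpr hαc
    have e1 : (-(α : ℂ)) ^ (s - 1) = (-(α : ℂ)) ^ s / (-(α : ℂ)) := by
      rw [Complex.cpow_sub _ _ hmαc, Complex.cpow_one]
    have e2 : (-(α : ℂ)) ^ (s - 2) = (-(α : ℂ)) ^ s / (α : ℂ) ^ 2 := by
      rw [Complex.cpow_sub _ _ hmαc,
        show (-(α : ℂ)) ^ (2 : ℂ) = (α : ℂ) ^ 2 by
          rw [show (2 : ℂ) = ((2 : ℕ) : ℂ) by norm_num, Complex.cpow_natCast]; ring]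
    have hPs : (-(α : ℂ)) ^ s ≠ 0 := by simp [Complex.cpow_eq_zero_iff, hαc]
    rw [hGE, hGD, hGA, e1, e2, hP1, hP2, h2s1, h2s2]
    have hDne : ∀ x : ℂ, x = 2 * (d : ℂ) * ((b1 : ℝ) : ℂ) ^ (s / 2)
        * Complex.Gamma ((s + 1 - (nu : ℂ)) / 2) * Complex.Gamma ((3 - s) / 2)
        * Complex.Gamma ((s - (nu : ℂ)) / 2) * (2 : ℂ) ^ s
        * ((b2 : ℝ) : ℂ) ^ ((s - 1) / 2) * (-(α : ℂ)) → x ≠ 0 := by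
      rintro x rfl
      simp [hΓ3, hΓ4, hΓ5, hαc, hdc, hb1c, hb2c, hQ, hR1, hR2]
    have h2 : Complex.I * K * ((b2 : ℝ) : ℂ) ^ ((s - 1) / 2) * Complex.Gamma (1 - s / 2)
          * Complex.Gamma ((s - (nu : ℂ)) / 2) * Complex.Gamma ((3 - s) / 2) * (-(α : ℂ)) ^ s * 2 * u2sm1
          / (2 * (d : ℂ) * ((b1 : ℝ) : ℂ) ^ (s / 2)
            * Complex.Gamma ((s + 1 - (nu : ℂ)) / 2) * Complex.Gamma ((3 - s) / 2)
            * Complex.Gamma ((s - (nu : ℂ)) / 2) * (2 : ℂ) ^ s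
            * ((b2 : ℝ) : ℂ) ^ ((s - 1) / 2) * (-(α : ℂ)))
        = (Complex.Gamma (1 - s / 2) * (-(α : ℂ)) ^ s * Complex.I * K * u2sm1
            / (Complex.Gamma ((s + 1 - (nu : ℂ)) / 2) * (2 : ℂ) ^ s * ((b1 : ℝ) : ℂ) ^ (s / 2)
              * (-(d : ℂ)) * (α : ℂ))) := by
      rw [div_eq_div_iff (hDne _ rfl)
        (by simp [hΓ4, hαc, hdc, hb1c, hQ, hR1])]
      ring
    have h3 : (1 - s / 2) * Complex.Gamma (1 - s / 2) * (-(α : ℂ)) ^ s * 4 * ((b1 : ℝ) : ℂ) * u1sm2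
          / ((α : ℂ) ^ 2 * Complex.Gamma ((s - 2 + 1 - (nu : ℂ)) / 2) * (2 : ℂ) ^ s
            * ((b1 : ℝ) : ℂ) ^ (s / 2))
        = Complex.Gamma (1 - s / 2) * (-(α : ℂ)) ^ s * ((b1 : ℝ) : ℂ) * (d : ℂ) * (s - 2)
            * (s - 1 - (nu : ℂ)) * u1sm2
            / (Complex.Gamma ((s + 1 - (nu : ℂ)) / 2) * (2 : ℂ) ^ s * ((b1 : ℝ) : ℂ) ^ (s / 2)
              * (-(d : ℂ)) * (α : ℂ) ^ 2) := by
      rw [show s - 2 + 1 - (nu : ℂ) = s - 1 - (nu : ℂ) by ring, hGB,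
        div_eq_div_iff (by simp [hΓ6, hαc, hQ, hR1])
          (by simp [hΓ6, h6z, hαc, hdc, hQ, hR1])]
      ring
    have hR : Complex.Gamma (1 - s / 2) * (-(α : ℂ)) ^ s * (-f1s)
          / (Complex.Gamma ((s + 1 - (nu : ℂ)) / 2) * (2 : ℂ) ^ s * ((b1 : ℝ) : ℂ) ^ (s / 2)
            * (-(d : ℂ)) * (V : ℂ) ^ 2 * (α : ℂ) ^ 2)
        = (-(α : ℂ)) ^ s * Complex.Gamma (1 - s / 2) * f1s
            / (((V ^ 2 * d : ℝ) : ℂ) * (2 : ℂ) ^ s * ((b1 : ℝ) : ℂ) ^ (s / 2)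
              * Complex.Gamma ((s + 1 - (nu : ℂ)) / 2) * (α : ℂ) ^ 2) := by
      rw [div_eq_div_iff (by simp [hΓ4, hαc, hdc, hVc, hQ, hR1])
        (by simp [hΓ4, hαc, hQ, hR1, hV, hd])]
      push_cast
      ring
    linear_combination (norm := (ring_nf; simp only [inv_inv]; ring1)) (Complex.Gamma (1 - s / 2) * (-(α : ℂ)) ^ s
        / (Complex.Gamma ((s + 1 - (nu : ℂ)) / 2) * (2 : ℂ) ^ s * ((b1 : ℝ) : ℂ) ^ (s / 2)))
        * heq + h2 + h3 + hR
  · -- α > 0 : |α| = α, sign = 1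
    rw [abs_of_pos hpos, Real.sign_of_pos hpos]
    simp only [Complex.ofReal_one]
    have e1 : ((α : ℂ)) ^ (s - 1) = ((α : ℂ)) ^ s / ((α : ℂ)) := by
      rw [Complex.cpow_sub _ _ hαc, Complex.cpow_one]
    have e2 : ((α : ℂ)) ^ (s - 2) = ((α : ℂ)) ^ s / (α : ℂ) ^ 2 := by
      rw [Complex.cpow_sub _ _ hαc,
        show ((α : ℂ)) ^ (2 : ℂ) = (α : ℂ) ^ 2 by
          rw [show (2 : ℂ) = ((2 : ℕ) : ℂ) by norm_num, Complex.cpow_natCast]]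
    have hPs : ((α : ℂ)) ^ s ≠ 0 := by simp [Complex.cpow_eq_zero_iff, hαc]
    rw [hGE, hGD, hGA, e1, e2, hP1, hP2, h2s1, h2s2]
    have hDne : ∀ x : ℂ, x = 2 * (d : ℂ) * ((b1 : ℝ) : ℂ) ^ (s / 2)
        * Complex.Gamma ((s + 1 - (nu : ℂ)) / 2) * Complex.Gamma ((3 - s) / 2)
        * Complex.Gamma ((s - (nu : ℂ)) / 2) * (2 : ℂ) ^ s
        * ((b2 : ℝ) : ℂ) ^ ((s - 1) / 2) * ((α : ℂ)) → x ≠ 0 := by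
      rintro x rfl
      simp [hΓ3, hΓ4, hΓ5, hαc, hdc, hb1c, hb2c, hQ, hR1, hR2]
    have h2 : Complex.I * K * ((b2 : ℝ) : ℂ) ^ ((s - 1) / 2) * Complex.Gamma (1 - s / 2)
          * Complex.Gamma ((s - (nu : ℂ)) / 2) * Complex.Gamma ((3 - s) / 2) * ((α : ℂ)) ^ s * 2 * u2sm1
          / (2 * (d : ℂ) * ((b1 : ℝ) : ℂ) ^ (s / 2)
            * Complex.Gamma ((s + 1 - (nu : ℂ)) / 2) * Complex.Gamma ((3 - s) / 2)
            * Complex.Gamma ((s - (nu : ℂ)) / 2) * (2 : ℂ) ^ s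
            * ((b2 : ℝ) : ℂ) ^ ((s - 1) / 2) * ((α : ℂ)))
        = -(Complex.Gamma (1 - s / 2) * ((α : ℂ)) ^ s * Complex.I * K * u2sm1)
            / (Complex.Gamma ((s + 1 - (nu : ℂ)) / 2) * (2 : ℂ) ^ s * ((b1 : ℝ) : ℂ) ^ (s / 2)
              * (-(d : ℂ)) * (α : ℂ)) := by
      rw [div_eq_div_iff (hDne _ rfl)
        (by simp [hΓ4, hαc, hdc, hb1c, hQ, hR1])]
      ring
    have h3 : (1 - s / 2) * Complex.Gamma (1 - s / 2) * ((α : ℂ)) ^ s * 4 * ((b1 : ℝ) : ℂ) * u1sm2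
          / ((α : ℂ) ^ 2 * Complex.Gamma ((s - 2 + 1 - (nu : ℂ)) / 2) * (2 : ℂ) ^ s
            * ((b1 : ℝ) : ℂ) ^ (s / 2))
        = Complex.Gamma (1 - s / 2) * ((α : ℂ)) ^ s * ((b1 : ℝ) : ℂ) * (d : ℂ) * (s - 2)
            * (s - 1 - (nu : ℂ)) * u1sm2
            / (Complex.Gamma ((s + 1 - (nu : ℂ)) / 2) * (2 : ℂ) ^ s * ((b1 : ℝ) : ℂ) ^ (s / 2)
              * (-(d : ℂ)) * (α : ℂ) ^ 2) := by
      rw [show s - 2 + 1 - (nu : ℂ) = s - 1 - (nu : ℂ) by ring, hGB,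
        div_eq_div_iff (by simp [hΓ6, hαc, hQ, hR1])
          (by simp [hΓ6, h6z, hαc, hdc, hQ, hR1])]
      ring
    have hR : Complex.Gamma (1 - s / 2) * ((α : ℂ)) ^ s * (-f1s)
          / (Complex.Gamma ((s + 1 - (nu : ℂ)) / 2) * (2 : ℂ) ^ s * ((b1 : ℝ) : ℂ) ^ (s / 2)
            * (-(d : ℂ)) * (V : ℂ) ^ 2 * (α : ℂ) ^ 2)
        = ((α : ℂ)) ^ s * Complex.Gamma (1 - s / 2) * f1s
            / (((V ^ 2 * d : ℝ) : ℂ) * (2 : ℂ) ^ s * ((b1 : ℝ) : ℂ) ^ (s / 2)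
              * Complex.Gamma ((s + 1 - (nu : ℂ)) / 2) * (α : ℂ) ^ 2) := by
      rw [div_eq_div_iff (by simp [hΓ4, hαc, hdc, hVc, hQ, hR1])
        (by simp [hΓ4, hαc, hQ, hR1, hV, hd])]
      push_cast
      ring
    linear_combination (norm := (ring_nf; simp only [inv_inv]; ring1)) (Complex.Gamma (1 - s / 2) * ((α : ℂ)) ^ s
        / (Complex.Gamma ((s + 1 - (nu : ℂ)) / 2) * (2 : ℂ) ^ s * ((b1 : ℝ) : ℂ) ^ (s / 2)))
        * heq - h2 + h3 + hR

set_option maxHeartbeats 1000000 in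
theorem carleman_problem_reduction
    (nu cd cs V : ℝ) (hnu0 : 0 < nu) (hnu1 : nu < 1)
    (hV : 0 < V) (hVs : V < cs) (hsd : cs < cd)
    (α : ℝ) (hα : α ≠ 0) (s : ℂ)
    (hΓ1 : Complex.Gamma (1 - s / 2) ≠ 0)
    (hΓ2 : Complex.Gamma (2 - s / 2) ≠ 0)
    (hΓ3 : Complex.Gamma ((3 - s) / 2) ≠ 0)
    (hΓ4 : Complex.Gamma ((s + 1 - (nu : ℂ)) / 2) ≠ 0)
    (hΓ5 : Complex.Gamma ((s - (nu : ℂ)) / 2) ≠ 0)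
    (hΓ6 : Complex.Gamma ((s - 1 - (nu : ℂ)) / 2) ≠ 0)
    (u1s u2s u1sm1 u2sm1 u1sm2 u2sm2 f1s f2s : ℂ)
    (heq1 : u1s
        + Complex.I * ((((aD cd V) ^ 2 - (aS cs V) ^ 2 : ℝ) : ℂ) * (s - 1)
            - (nu : ℂ) * (((aS cs V) ^ 2 : ℝ) : ℂ))
          / (((1 - (aD cd V) ^ 2 : ℝ) : ℂ) * (α : ℂ)) * u2sm1
        + (((aS cs V) ^ 2 : ℝ) : ℂ) * (s - 2) * (s - 1 - (nu : ℂ))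
          / (((1 - (aD cd V) ^ 2 : ℝ) : ℂ) * (α : ℂ) ^ 2) * u1sm2
      = -f1s / (((1 - (aD cd V) ^ 2 : ℝ) : ℂ) * (V : ℂ) ^ 2 * (α : ℂ) ^ 2))
    (heq2 : u2s
        + Complex.I * ((((aD cd V) ^ 2 - (aS cs V) ^ 2 : ℝ) : ℂ) * (s - 1)
            - (nu : ℂ) * (((aD cd V) ^ 2 - 2 * (aS cs V) ^ 2 : ℝ) : ℂ))
          / (((1 - (aS cs V) ^ 2 : ℝ) : ℂ) * (α : ℂ)) * u1sm1
        + (((aD cd V) ^ 2 : ℝ) : ℂ) * (s - 2) * (s - 1 - (nu : ℂ))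
          / (((1 - (aS cs V) ^ 2 : ℝ) : ℂ) * (α : ℂ) ^ 2) * u2sm2
      = -f2s / (((1 - (aS cs V) ^ 2 : ℝ) : ℂ) * (V : ℂ) ^ 2 * (α : ℂ) ^ 2)) :
    (PhiFun nu (beta1 cd cs V) α s u1s
        - Complex.I * (Real.sign α : ℂ) * GG1 nu cd cs V s
          * PhiFun nu (beta2 cd cs V) α (s - 1) u2sm1
        + PhiFun nu (beta1 cd cs V) α (s - 2) u1sm2
      = ((|α| : ℝ) : ℂ) ^ (s - 2) * Complex.Gamma (1 - s / 2) * f1s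
          / (((V ^ 2 * ((aD cd V) ^ 2 - 1) : ℝ) : ℂ) * (2 : ℂ) ^ s
            * ((beta1 cd cs V : ℝ) : ℂ) ^ (s / 2) * Complex.Gamma ((s + 1 - (nu : ℂ)) / 2))) ∧
    (PhiFun nu (beta2 cd cs V) α s u2s
        - Complex.I * (Real.sign α : ℂ) * GG2 nu cd cs V s
          * PhiFun nu (beta1 cd cs V) α (s - 1) u1sm1
        + PhiFun nu (beta2 cd cs V) α (s - 2) u2sm2
      = ((|α| : ℝ) : ℂ) ^ (s - 2) * Complex.Gamma (1 - s / 2) * f2s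
          / (((V ^ 2 * ((aS cs V) ^ 2 - 1) : ℝ) : ℂ) * (2 : ℂ) ^ s
            * ((beta2 cd cs V : ℝ) : ℂ) ^ (s / 2) * Complex.Gamma ((s + 1 - (nu : ℂ)) / 2))) := by
  have hVne : V ≠ 0 := ne_of_gt hV
  have haD : 1 < aD cd V := (one_lt_div hV).mpr (by linarith)
  have haS : 1 < aS cs V := (one_lt_div hV).mpr hVs
  have hd1 : (aD cd V) ^ 2 - 1 ≠ 0 := by nlinarith
  have hd2 : (aS cs V) ^ 2 - 1 ≠ 0 := by nlinarith
  have hb1 : beta1 cd cs V ≠ 0 := by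
    rw [beta1]; exact div_ne_zero (by positivity) hd1
  have hb2 : beta2 cd cs V ≠ 0 := by
    rw [beta2]; exact div_ne_zero (by positivity) hd2
  have hrel1 : ((aS cs V : ℝ) : ℂ) ^ 2
      = ((beta1 cd cs V : ℝ) : ℂ) * (((aD cd V : ℝ) : ℂ) ^ 2 - 1) := by
    have h : (aS cs V) ^ 2 = beta1 cd cs V * ((aD cd V) ^ 2 - 1) := by
      rw [beta1]; field_simp
    have h2 := congrArg (fun x : ℝ => (x : ℂ)) h
    push_cast at h2
    exact h2
  have hrel2 : ((aD cd V : ℝ) : ℂ) ^ 2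
      = ((beta2 cd cs V : ℝ) : ℂ) * (((aS cs V : ℝ) : ℂ) ^ 2 - 1) := by
    have h : (aD cd V) ^ 2 = beta2 cd cs V * ((aS cs V) ^ 2 - 1) := by
      rw [beta2]; field_simp
    have h2 := congrArg (fun x : ℝ => (x : ℂ)) h
    push_cast at h2
    exact h2
  constructor
  · simp only [GG1, bb1]
    refine aux_red nu V ((aD cd V) ^ 2 - 1) (beta1 cd cs V) (beta2 cd cs V) α hα s
      hVne hd1 hb1 hb2 hΓ1 hΓ3 hΓ4 hΓ5 hΓ6
      ((((aD cd V) ^ 2 - (aS cs V) ^ 2 : ℝ) : ℂ) * (s - 1)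
        - (nu : ℂ) * (((aS cs V) ^ 2 : ℝ) : ℂ)) u1s u2sm1 u1sm2 f1s ?_
    push_cast at heq1 ⊢
    linear_combination heq1 - ((s - 2) * (s - 1 - (nu : ℂ))
      / ((1 - ((aD cd V : ℝ) : ℂ) ^ 2) * (α : ℂ) ^ 2) * u1sm2) * hrel1
  · simp only [GG2, bb2]
    refine aux_red nu V ((aS cs V) ^ 2 - 1) (beta2 cd cs V) (beta1 cd cs V) α hα s
      hVne hd2 hb2 hb1 hΓ1 hΓ3 hΓ4 hΓ5 hΓ6
      ((((aD cd V) ^ 2 - (aS cs V) ^ 2 : ℝ) : ℂ) * (s - 1)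
        - (nu : ℂ) * (((aD cd V) ^ 2 - 2 * (aS cs V) ^ 2 : ℝ) : ℂ)) u2s u1sm1 u2sm2 f2s ?_
    push_cast at heq2 ⊢
    linear_combination heq2 - ((s - 2) * (s - 1 - (nu : ℂ))
      / ((1 - ((aS cs V : ℝ) : ℂ) ^ 2) * (α : ℂ) ^ 2) * u2sm2) * hrel2


end
end

section
/- Let 0 < ν < 1, let s ∈ ℂ with 0 < Re s < ν, and let ξ ∈ ℝ with ξ ≠ 0. Then the improper integral lim_{R→∞} ∫_{−R}^{R} e^{iαξ} · sgn(α) · |α|^{ν−s−1} dα exists and equals 2i·Γ(ν−s)·sin(π(ν−s)/2)·sgn(ξ)·|ξ|^{s−ν}. -/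
open MeasureTheory Filter Complex
open Set
open scoped Interval

lemma aux_meas' (c w : ℂ) :
    Measurable (fun t : ℝ => (t : ℂ) ^ (c - 1) * Complex.exp (-(w * t))) :=
  ((Complex.measurable_ofReal.pow_const _)).mul
    ((Complex.measurable_ofReal.const_mul w).neg.cexp)

lemma aux_meas (c w : ℂ) :
    AEStronglyMeasurable (fun t : ℝ => (t : ℂ) ^ (c - 1) * Complex.exp (-(w * t)))
      (volume.restrict (Ioi 0)) :=
  (aux_meas' c w).aestronglyMeasurable

lemma aux_norm {c : ℂ} {w : ℂ} {t : ℝ} (ht : 0 < t) :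
    ‖(t : ℂ) ^ (c - 1) * Complex.exp (-(w * t))‖ = t ^ (c.re - 1) * Real.exp (-(w.re * t)) := by
  rw [norm_mul, Complex.norm_exp,
    Complex.norm_cpow_eq_rpow_re_of_pos ht]
  norm_num

lemma aux_intOn {c : ℂ} (hc : 0 < c.re) {w : ℂ} (hw : 0 < w.re) :
    IntegrableOn (fun t : ℝ => (t : ℂ) ^ (c - 1) * Complex.exp (-(w * t))) (Ioi 0) := by
  have h := integrableOn_rpow_mul_exp_neg_mul_rpow (p := 1) (s := c.re - 1) (b := w.re)
    (by linarith) one_pos hw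
  simp only [Real.rpow_one] at h
  refine (h.mono' (aux_meas c w) ?_)
  filter_upwards [ae_restrict_mem measurableSet_Ioi] with t ht
  rw [aux_norm ht, neg_mul]

lemma aux_diffOn {c : ℂ} (hc : 0 < c.re) :
    DifferentiableOn ℂ (fun w : ℂ => ∫ t in Ioi (0:ℝ), (t : ℂ) ^ (c - 1) * Complex.exp (-(w * t)))
      {w : ℂ | 0 < w.re} := by
  intro w₀ hw₀
  have hw₀' : 0 < w₀.re := hw₀
  set δ : ℝ := w₀.re / 2 with hδ
  have hδpos : 0 < δ := by positivity
  have key := hasDerivAt_integral_of_dominated_loc_of_deriv_le (μ := volume.restrict (Ioi 0))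
    (x₀ := w₀) (s := Metric.ball w₀ δ)
    (F := fun w (t : ℝ) => (t : ℂ) ^ (c - 1) * Complex.exp (-(w * t)))
    (F' := fun w (t : ℝ) => (t : ℂ) ^ (c - 1) * (Complex.exp (-(w * t)) * -(t : ℂ)))
    (bound := fun t : ℝ => t ^ c.re * Real.exp (-δ * t))
    (Metric.ball_mem_nhds w₀ hδpos) (Eventually.of_forall fun w => aux_meas c w) (aux_intOn hc hw₀') ?_ ?_ ?_ ?_
  · exact (key.2.differentiableAt).differentiableWithinAt
  · apply Measurable.aestronglyMeasurable
    exact ((Complex.measurable_ofReal.pow_const _)).mul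
      (((Complex.measurable_ofReal.const_mul w₀).neg.cexp).mul Complex.measurable_ofReal.neg)
  · filter_upwards [ae_restrict_mem measurableSet_Ioi] with t ht x hx
    have ht' : (0:ℝ) < t := ht
    rw [norm_mul, norm_mul, norm_neg,
      Complex.norm_exp, Complex.norm_cpow_eq_rpow_re_of_pos ht',
      Complex.norm_real, Real.norm_eq_abs, abs_of_pos ht']
    have hre : δ ≤ x.re := by
      have h1 : |(x - w₀).re| ≤ ‖x - w₀‖ := Complex.abs_re_le_norm _
      have h2 : ‖x - w₀‖ < δ := by
        rwa [Metric.mem_ball, Complex.dist_eq] at hx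
      have := abs_le.mp (h1.trans h2.le)
      simp only [Complex.sub_re] at this
      linarith [this.1]
    have h3 : (-(x * t)).re = -(x.re * t) := by simp
    rw [h3]
    calc t ^ (c.re - 1) * (Real.exp (-(x.re * t)) * t)
        = t ^ c.re * Real.exp (-(x.re * t)) := by
          rw [Real.rpow_sub ht', Real.rpow_one]
          field_simp
      _ ≤ t ^ c.re * Real.exp (-δ * t) := by
          gcongr
          nlinarith [ht'.le]
  · have h := integrableOn_rpow_mul_exp_neg_mul_rpow (p := 1) (s := c.re) (b := δ)
      (by linarith) one_pos hδpos
    simpa only [Real.rpow_one, IntegrableOn] using h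
  · filter_upwards [ae_restrict_mem measurableSet_Ioi] with t ht x hx
    have h1 : HasDerivAt (fun w : ℂ => -(w * (t:ℂ))) (-(t:ℂ)) x := by
      have h := ((hasDerivAt_id x).mul_const (t:ℂ)).neg
      simp only [id, one_mul] at h
      exact h
    have h2 := h1.cexp
    exact (h2.const_mul _)

lemma aux_identity {c : ℂ} (hc : 0 < c.re) {w : ℂ} (hw : 0 < w.re) :
    ∫ t in Ioi (0:ℝ), (t : ℂ) ^ (c - 1) * Complex.exp (-(w * t))
      = Complex.Gamma c * w ^ (-c) := by
  set F : ℂ → ℂ := fun w => ∫ t in Ioi (0:ℝ), (t : ℂ) ^ (c - 1) * Complex.exp (-(w * t))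
  set G : ℂ → ℂ := fun w => Complex.Gamma c * w ^ (-c)
  set U : Set ℂ := {w : ℂ | 0 < w.re}
  have hUopen : IsOpen U := isOpen_lt continuous_const Complex.continuous_re
  have hUconn : IsPreconnected U := (convex_halfSpace_re_gt (0:ℝ)).isPreconnected
  have hF : AnalyticOnNhd ℂ F U := (aux_diffOn hc).analyticOnNhd hUopen
  have hG : AnalyticOnNhd ℂ G U := by
    apply DifferentiableOn.analyticOnNhd _ hUopen
    intro z hz
    exact ((differentiableAt_id.cpow (differentiableAt_const (-c))
      (Or.inl hz)).const_mul _).differentiableWithinAt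
  have hreal : ∀ r : ℝ, 0 < r → F r = G r := by
    intro r hr
    have h := integral_cpow_mul_exp_neg_mul_Ioi hc hr
    have h2 : F r = (1 / (r:ℂ)) ^ c * Complex.Gamma c := by
      rw [← h]
    rw [h2]
    have harg : Complex.arg r ≠ Real.pi := by
      rw [Complex.arg_ofReal_of_nonneg hr.le]
      exact fun h => Real.pi_ne_zero h.symm
    have : (1 / (r:ℂ)) ^ c = (r:ℂ) ^ (-c) := by
      rw [one_div, inv_cpow _ _ harg, ← cpow_neg]
    rw [this, mul_comm]
  have hfreq : ∃ᶠ z in nhdsWithin (1:ℂ) {(1:ℂ)}ᶜ, F z = G z := by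
    have htend : Tendsto (fun n : ℕ => ((1 + 1/(n+1) : ℝ) : ℂ)) atTop
        (nhdsWithin (1:ℂ) {(1:ℂ)}ᶜ) := by
      apply tendsto_nhdsWithin_of_tendsto_nhds_of_eventually_within
      · have : Tendsto (fun n : ℕ => (1 + 1/(n+1) : ℝ)) atTop (nhds 1) := by
          have := tendsto_one_div_add_atTop_nhds_zero_nat (𝕜 := ℝ)
          simpa using (tendsto_const_nhds (x := (1:ℝ))).add this
        exact (Complex.continuous_ofReal.tendsto 1).comp this
      · filter_upwards with n
        simp only [Set.mem_compl_iff, Set.mem_singleton_iff]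
        intro h
        have : (1 + 1/(n+1) : ℝ) = 1 := by exact_mod_cast h
        have hpos : 0 < 1/((n:ℝ)+1) := by positivity
        linarith
    refine htend.frequently (Frequently.of_forall fun n => ?_)
    refine hreal _ ?_
    have hpos : 0 < 1/((n:ℝ)+1) := by positivity
    linarith
  have h1U : (1:ℂ) ∈ U := by simp [U]
  have := hF.eqOn_of_preconnected_of_frequently_eq hG hUconn h1U hfreq
  exact this hw

lemma aux_tail_bound {c : ℂ} (hc0 : 0 < c.re) (hc1 : c.re < 1) {w : ℂ} (hw : 0 ≤ w.re)
    {m : ℝ} (hm : 0 < m) (hmw : m ≤ ‖w‖) {R R' : ℝ} (hR : 1 ≤ R) (hRR' : R ≤ R') :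
    ‖∫ t in R..R', (t : ℂ) ^ (c - 1) * Complex.exp (-(w * t))‖
      ≤ (2 + ‖c - 1‖ / (1 - c.re)) / m * R ^ (c.re - 1) := by
  have hw0 : w ≠ 0 := by
    intro h; rw [h] at hmw; simp at hmw; linarith
  have hRpos : (0:ℝ) < R := lt_of_lt_of_le one_pos hR
  have hR'pos : (0:ℝ) < R' := lt_of_lt_of_le hRpos hRR'
  have hcne : c - 1 ≠ 0 := by
    intro h
    have : c = 1 := by linear_combination h
    rw [this] at hc1; norm_num at hc1
  have h0mem : (0:ℝ) ∉ [[R, R']] := by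
    rw [Set.uIcc_of_le hRR', Set.mem_Icc]
    push_neg
    intro h; linarith
  set u : ℝ → ℂ := fun t => (t : ℂ) ^ (c - 1)
  set v : ℝ → ℂ := fun t => -Complex.exp (-(w * t)) / w
  set u' : ℝ → ℂ := fun t => (c - 1) * (t : ℂ) ^ (c - 2)
  set v' : ℝ → ℂ := fun t => Complex.exp (-(w * t))
  have hu : ∀ x ∈ [[R, R']], HasDerivAt u (u' x) x := by
    intro x hx
    have hx0 : x ≠ 0 := fun h => h0mem (h ▸ hx)
    have hr : c - 2 ≠ -1 := by
      intro h; apply hcne; linear_combination h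
    have h1 := (hasDerivAt_ofReal_cpow_const' hx0 hr).const_mul (c - 1)
    have he : c - 2 + 1 = c - 1 := by ring
    rw [he] at h1
    have hfun : (fun y : ℝ => (c - 1) * ((y:ℂ) ^ (c - 1) / (c - 1)))
        = fun y : ℝ => (y:ℂ) ^ (c - 1) := by
      funext y; field_simp
    rwa [hfun] at h1
  have hv : ∀ x ∈ [[R, R']], HasDerivAt v (v' x) x := by
    intro x hx
    have h1 : HasDerivAt (fun t : ℝ => -(w * (t:ℂ))) (-w) x := by
      simpa using (((hasDerivAt_id ((x:ℝ):ℂ)).const_mul w).neg).comp_ofReal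
    have h2 := (h1.cexp.neg).div_const w
    have h3 : v' x = -(Complex.exp (-(w * (x:ℂ))) * -w) / w := by
      show Complex.exp (-(w * (x:ℂ))) = _
      rw [mul_neg, neg_neg, mul_div_assoc, div_self hw0, mul_one]
    rw [h3]
    exact h2
  have hu'int : IntervalIntegrable u' volume R R' :=
    (intervalIntegral.intervalIntegrable_cpow (r := c - 2) (Or.inr h0mem)).const_mul _
  have hv'int : IntervalIntegrable v' volume R R' := by
    apply Continuous.intervalIntegrable
    exact Complex.continuous_exp.comp ((continuous_const.mul Complex.continuous_ofReal).neg)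
  have hibp := intervalIntegral.integral_mul_deriv_eq_deriv_mul hu hv hu'int hv'int
  have hint_eq : (∫ t in R..R', (t : ℂ) ^ (c - 1) * Complex.exp (-(w * t)))
      = ∫ t in R..R', u t * v' t := rfl
  rw [hint_eq, hibp]
  -- bounds
  have hboundary : ∀ x : ℝ, 0 < x → ‖u x * v x‖ ≤ x ^ (c.re - 1) / m := by
    intro x hx
    rw [norm_mul]
    have h1 : ‖u x‖ = x ^ (c.re - 1) := by
      rw [Complex.norm_cpow_eq_rpow_re_of_pos hx]
      norm_num
    have h2 : ‖v x‖ ≤ 1 / m := by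
      rw [norm_div, norm_neg, Complex.norm_exp]
      have hh : (-(w * (x:ℂ))).re = -(w.re * x) := by simp
      rw [hh]
      have he : Real.exp (-(w.re * x)) ≤ 1 := by
        rw [← Real.exp_zero]
        exact Real.exp_le_exp.mpr (by nlinarith)
      exact div_le_div₀ (by norm_num) he hm hmw
    calc ‖u x‖ * ‖v x‖ ≤ x ^ (c.re - 1) * (1 / m) := by
          rw [h1]
          exact mul_le_mul_of_nonneg_left h2 (Real.rpow_nonneg hx.le _)
      _ = x ^ (c.re - 1) / m := by ring
  have hmono : R' ^ (c.re - 1) ≤ R ^ (c.re - 1) :=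
    Real.rpow_le_rpow_of_nonpos hRpos hRR' (by linarith)
  have hIbnd : ‖∫ t in R..R', u' t * v t‖
      ≤ ‖c - 1‖ / m * (R ^ (c.re - 1) / (1 - c.re)) := by
    have hg : IntervalIntegrable (fun t : ℝ => ‖c - 1‖ / m * t ^ (c.re - 2))
        volume R R' := (intervalIntegral.intervalIntegrable_rpow (Or.inr h0mem)).const_mul _
    have hle := intervalIntegral.norm_integral_le_abs_of_norm_le (μ := volume)
      (f := fun t => u' t * v t)
      (g := fun t : ℝ => ‖c - 1‖ / m * t ^ (c.re - 2)) ?_ hg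
    · refine hle.trans ?_
      have hval : (∫ t in R..R', (t:ℝ) ^ (c.re - 2)) =
          (R' ^ (c.re - 1) - R ^ (c.re - 1)) / (c.re - 1) := by
        rw [integral_rpow (Or.inr ⟨fun h => by linarith [h], h0mem⟩)]
        have he : c.re - 2 + 1 = c.re - 1 := by ring
        rw [he]
      rw [intervalIntegral.integral_const_mul, hval]
      rw [abs_mul]
      have h1 : |‖c - 1‖ / m| = ‖c - 1‖ / m :=
        _root_.abs_of_nonneg (by positivity)
      rw [h1]
      apply mul_le_mul_of_nonneg_left _ (by positivity)
      rw [abs_div]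
      have h2 : |(R' ^ (c.re - 1) - R ^ (c.re - 1))| = R ^ (c.re - 1) - R' ^ (c.re - 1) := by
        rw [abs_sub_comm, _root_.abs_of_nonneg (by linarith)]
      have h3 : |c.re - 1| = 1 - c.re := by rw [_root_.abs_of_nonpos (by linarith)]; ring
      rw [h2, h3]
      apply div_le_div₀ _ _ (by linarith) le_rfl
      · positivity
      · have := Real.rpow_nonneg hR'pos.le (c.re - 1); linarith
    · filter_upwards [ae_restrict_mem measurableSet_uIoc] with t ht
      have htpos : 0 < t := by
        rcases Set.mem_uIoc.mp ht with h | h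
        · linarith [h.1]
        · linarith [h.1]
      rw [norm_mul]
      have h1 : ‖u' t‖ = ‖c - 1‖ * t ^ (c.re - 2) := by
        rw [norm_mul,
          Complex.norm_cpow_eq_rpow_re_of_pos htpos]
        norm_num
      have h2 : ‖v t‖ ≤ 1 / m := by
        rw [norm_div, norm_neg, Complex.norm_exp]
        have hh : (-(w * (t:ℂ))).re = -(w.re * t) := by simp
        rw [hh]
        have he : Real.exp (-(w.re * t)) ≤ 1 := by
          rw [← Real.exp_zero]
          exact Real.exp_le_exp.mpr (by nlinarith)
        exact div_le_div₀ (by norm_num) he hm hmw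
      calc ‖u' t‖ * ‖v t‖ ≤ (‖c - 1‖ * t ^ (c.re - 2)) * (1 / m) := by
            rw [h1]
            exact mul_le_mul_of_nonneg_left h2 (by positivity)
        _ = ‖c - 1‖ / m * t ^ (c.re - 2) := by ring
  calc ‖u R' * v R' - u R * v R - ∫ t in R..R', u' t * v t‖
      ≤ ‖u R' * v R' - u R * v R‖ + ‖∫ t in R..R', u' t * v t‖ := norm_sub_le _ _
    _ ≤ (‖u R' * v R'‖ + ‖u R * v R‖) + ‖∫ t in R..R', u' t * v t‖ := by
        gcongr; exact norm_sub_le _ _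
    _ ≤ (R' ^ (c.re - 1) / m + R ^ (c.re - 1) / m)
        + ‖c - 1‖ / m * (R ^ (c.re - 1) / (1 - c.re)) :=
        add_le_add (add_le_add (hboundary _ hR'pos) (hboundary _ hRpos)) hIbnd
    _ ≤ (R ^ (c.re - 1) / m + R ^ (c.re - 1) / m)
        + ‖c - 1‖ / m * (R ^ (c.re - 1) / (1 - c.re)) := by
        have h5 : R' ^ (c.re - 1) / m ≤ R ^ (c.re - 1) / m := by gcongr
        exact add_le_add (add_le_add_left h5 _) le_rfl
    _ = (2 + ‖c - 1‖ / (1 - c.re)) / m * R ^ (c.re - 1) := by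
        have hm' : m ≠ 0 := hm.ne'
        have hs' : (1 : ℝ) - c.re ≠ 0 := by intro h; linarith
        field_simp
        ring

lemma aux_tendsto {c : ℂ} (hc0 : 0 < c.re) (hc1 : c.re < 1) {z : ℂ} (hz : z.re = 0)
    (hz0 : z ≠ 0) :
    Tendsto (fun R : ℝ => ∫ t in (0:ℝ)..R, (t : ℂ) ^ (c - 1) * Complex.exp (-(z * t))) atTop
      (nhds (Complex.Gamma c * z ^ (-c))) := by
  have hzim : z.im ≠ 0 := by
    intro h; apply hz0; rw [Complex.ext_iff]; simp [hz, h]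
  set m : ℝ := |z.im| with hmdef
  have hm : 0 < m := abs_pos.mpr hzim
  have habs : ∀ ε : ℝ, m ≤ ‖(ε:ℂ) + z‖ := by
    intro ε
    have h1 : ((ε:ℂ) + z).im = z.im := by simp
    have := Complex.abs_im_le_norm ((ε:ℂ) + z)
    rwa [h1] at this
  set C : ℝ := (2 + ‖c - 1‖ / (1 - c.re)) / m with hCdef
  set f : ℝ → ℝ → ℂ := fun ε t => (t:ℂ) ^ (c - 1) * Complex.exp (-(((ε:ℂ) + z) * t)) with hfdef
  set J : ℝ → ℝ → ℂ := fun ε R => ∫ t in (0:ℝ)..R, f ε t with hJdef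
  set L : ℂ := Complex.Gamma c * z ^ (-c) with hLdef
  have hf0 : ∀ t : ℝ, f 0 t = (t:ℂ) ^ (c - 1) * Complex.exp (-(z * t)) := by
    intro t; simp [hfdef]
  have key : ∀ R : ℝ, 1 ≤ R → ‖J 0 R - L‖ ≤ C * R ^ (c.re - 1) := by
    intro R hR
    have hR0 : (0:ℝ) < R := lt_of_lt_of_le one_pos hR
    -- continuity of J · R at ε = 0 from the right
    have hJcont : Tendsto (fun ε => J ε R) (nhdsWithin 0 (Ioi 0)) (nhds (J 0 R)) := by
      have hrw : ∀ ε : ℝ, J ε R = ∫ t in Ioc (0:ℝ) R, f ε t := fun ε =>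
        intervalIntegral.integral_of_le hR0.le
      rw [hrw 0]
      simp_rw [hrw]
      apply tendsto_integral_filter_of_dominated_convergence
        (bound := fun t : ℝ => t ^ (c.re - 1))
      · filter_upwards with ε
        exact (aux_meas' c _).aestronglyMeasurable
      · filter_upwards [eventually_mem_nhdsWithin] with ε (hε : ε ∈ Ioi (0:ℝ))
        filter_upwards [ae_restrict_mem measurableSet_Ioc] with t ht
        rw [aux_norm ht.1]
        have h1 : (((ε:ℂ) + z)).re = ε := by simp [hz]
        rw [h1]
        have h2 : Real.exp (-(ε * t)) ≤ 1 := by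
          rw [← Real.exp_zero]
          apply Real.exp_le_exp.mpr
          nlinarith [le_of_lt (Set.mem_Ioi.mp hε), ht.1.le]
        nth_rewrite 2 [← mul_one (t ^ (c.re - 1))]
        exact mul_le_mul_of_nonneg_left h2 (Real.rpow_nonneg ht.1.le _)
      · have : IntegrableOn (fun t : ℝ => t ^ (c.re - 1)) (Ioc 0 R) := by
          rw [← intervalIntegrable_iff_integrableOn_Ioc_of_le hR0.le]
          exact intervalIntegral.intervalIntegrable_rpow' (by linarith)
        exact this
      · filter_upwards [ae_restrict_mem measurableSet_Ioc] with t ht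
        have hcont : Continuous fun ε : ℝ => f ε t := by
          apply Continuous.mul continuous_const
          exact Complex.continuous_exp.comp
            (((Complex.continuous_ofReal.add continuous_const).mul continuous_const).neg)
        exact (hcont.tendsto 0).mono_left nhdsWithin_le_nhds
    -- convergence of the Gamma expression
    have hFcont : Tendsto (fun ε : ℝ => Complex.Gamma c * ((ε:ℂ) + z) ^ (-c))
        (nhdsWithin 0 (Ioi 0)) (nhds L) := by
      have hslit : z ∈ Complex.slitPlane := Or.inr hzim
      have h1 : Tendsto (fun ε : ℝ => (ε:ℂ) + z) (nhds 0) (nhds z) := by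
        have hco : Continuous (fun ε : ℝ => (ε:ℂ) + z) :=
          Complex.continuous_ofReal.add continuous_const
        have := hco.tendsto (0:ℝ)
        simpa using this
      have h2 := (continuousAt_cpow_const (b := -c) hslit).tendsto.comp h1
      have h3 := (tendsto_const_nhds (x := Complex.Gamma c)).mul h2
      exact h3.mono_left nhdsWithin_le_nhds
    -- tail bound for positive ε
    have htail : ∀ ε : ℝ, 0 < ε →
        ‖J ε R - Complex.Gamma c * ((ε:ℂ) + z) ^ (-c)‖ ≤ C * R ^ (c.re - 1) := by
      intro ε hε
      have hwre : 0 < ((ε:ℂ) + z).re := by simp [hz, hε]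
      have hint : IntegrableOn (f ε) (Ioi 0) := aux_intOn hc0 hwre
      have hid : ∫ t in Ioi (0:ℝ), f ε t = Complex.Gamma c * ((ε:ℂ) + z) ^ (-c) :=
        aux_identity hc0 hwre
      have hsplit : ∫ t in Ioi (0:ℝ), f ε t
          = (∫ t in Ioc (0:ℝ) R, f ε t) + ∫ t in Ioi R, f ε t := by
        rw [← setIntegral_union (Set.Ioc_disjoint_Ioi le_rfl) measurableSet_Ioi
          (hint.mono_set Set.Ioc_subset_Ioi_self) (hint.mono_set (Set.Ioi_subset_Ioi hR0.le)),
          Set.Ioc_union_Ioi_eq_Ioi hR0.le]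
      have hJR : J ε R = ∫ t in Ioc (0:ℝ) R, f ε t := intervalIntegral.integral_of_le hR0.le
      have hbnd : ‖∫ t in Ioi R, f ε t‖ ≤ C * R ^ (c.re - 1) := by
        have hlim : Tendsto (fun R' => ∫ t in R..R', f ε t) atTop
            (nhds (∫ t in Ioi R, f ε t)) :=
          intervalIntegral_tendsto_integral_Ioi R
            (hint.mono_set (Set.Ioi_subset_Ioi hR0.le)) tendsto_id
        apply le_of_tendsto hlim.norm
        filter_upwards [eventually_ge_atTop R] with R' hR'
        exact aux_tail_bound hc0 hc1 hwre.le hm (habs ε) hR hR'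
      have heq : J ε R - Complex.Gamma c * ((ε:ℂ) + z) ^ (-c) = -(∫ t in Ioi R, f ε t) := by
        rw [← hid, hsplit, hJR]; ring
      rw [heq, norm_neg]
      exact hbnd
    -- combine
    have hg : Tendsto (fun ε : ℝ => ‖J 0 R - J ε R‖ + C * R ^ (c.re - 1)
        + ‖Complex.Gamma c * ((ε:ℂ) + z) ^ (-c) - L‖) (nhdsWithin 0 (Ioi 0))
        (nhds (0 + C * R ^ (c.re - 1) + 0)) := by
      refine Tendsto.add (Tendsto.add ?_ tendsto_const_nhds) ?_
      · have := (tendsto_const_nhds (x := J 0 R)).sub hJcont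
        have h2 := this.norm
        simpa using h2
      · have := hFcont.sub (tendsto_const_nhds (x := L))
        have h2 := this.norm
        simpa using h2
    have hle : ∀ᶠ ε in nhdsWithin (0:ℝ) (Ioi 0), ‖J 0 R - L‖
        ≤ ‖J 0 R - J ε R‖ + C * R ^ (c.re - 1)
          + ‖Complex.Gamma c * ((ε:ℂ) + z) ^ (-c) - L‖ := by
      filter_upwards [eventually_mem_nhdsWithin] with ε (hε : ε ∈ Ioi (0:ℝ))
      have h4 := dist_triangle4 (J 0 R) (J ε R) (Complex.Gamma c * ((ε:ℂ) + z) ^ (-c)) L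
      simp only [dist_eq_norm] at h4
      have := htail ε hε
      linarith
    have := ge_of_tendsto hg hle
    simpa using this
  -- squeeze
  have hCR : Tendsto (fun R : ℝ => C * R ^ (c.re - 1)) atTop (nhds 0) := by
    have h1 := tendsto_rpow_neg_atTop (y := 1 - c.re) (by linarith)
    have h2 : (fun x : ℝ => x ^ (-(1 - c.re))) = fun x : ℝ => x ^ (c.re - 1) := by
      funext x; rw [neg_sub]
    rw [h2] at h1
    simpa using h1.const_mul C
  have hsq : Tendsto (fun R => J 0 R - L) atTop (nhds 0) := by
    apply squeeze_zero_norm' _ hCR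
    filter_upwards [eventually_ge_atTop 1] with R hR
    exact key R hR
  have hmain : Tendsto (J 0) atTop (nhds L) := by
    have := hsq.add_const L
    simpa using this
  have hfeq : (fun R : ℝ => ∫ t in (0:ℝ)..R, (t : ℂ) ^ (c - 1) * Complex.exp (-(z * t)))
      = J 0 := by
    funext R
    rw [hJdef]
    simp only []
    apply intervalIntegral.integral_congr
    intro t _
    rw [hf0]
  rw [hfeq]
  exact hmain

lemma aux_const {c : ℂ} (hc1 : c ≠ 1) {ξ : ℝ} (hξ : ξ ≠ 0) :
    Complex.Gamma c * ((-(Complex.I * ξ)) ^ (-c) - (Complex.I * ξ) ^ (-c))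
      = 2 * Complex.I * Complex.Gamma c * Complex.sin (↑Real.pi * c / 2) * (Real.sign ξ : ℂ)
        * ((|ξ| : ℝ) : ℂ) ^ (-c) := by
  have hsin : Complex.exp (↑Real.pi * c / 2 * Complex.I)
      - Complex.exp (-(↑Real.pi * c / 2 * Complex.I))
      = 2 * Complex.I * Complex.sin (↑Real.pi * c / 2) := by
    simp only [Complex.sin]
    rw [show -(↑Real.pi * c / 2) * Complex.I = -(↑Real.pi * c / 2 * Complex.I) by ring]
    linear_combination (Complex.exp (↑Real.pi * c / 2 * Complex.I)
      - Complex.exp (-(↑Real.pi * c / 2 * Complex.I))) * Complex.I_mul_I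
  rcases hξ.lt_or_gt with hneg | hpos
  · -- ξ < 0
    have habs : |ξ| = -ξ := abs_of_neg hneg
    have hsign : Real.sign ξ = -1 := Real.sign_of_neg hneg
    have hpos' : (0:ℝ) < -ξ := by linarith
    have l1 : (-(Complex.I * ξ) : ℂ) = ((-ξ : ℝ) : ℂ) * Complex.I := by push_cast; ring
    have l2 : (Complex.I * ξ : ℂ) = ((-ξ : ℝ) : ℂ) * (-Complex.I) := by push_cast; ring
    have hlogA : Complex.log (((-ξ : ℝ) : ℂ) * Complex.I)
        = ↑(Real.log (-ξ)) + ↑Real.pi / 2 * Complex.I := by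
      rw [Complex.log_ofReal_mul hpos' Complex.I_ne_zero, Complex.log_I]
    have hlogB : Complex.log (((-ξ : ℝ) : ℂ) * (-Complex.I))
        = ↑(Real.log (-ξ)) + -(↑Real.pi / 2) * Complex.I := by
      rw [Complex.log_ofReal_mul hpos' (by simp [Complex.I_ne_zero]), Complex.log_neg_I]
    have hAne : ((-ξ : ℝ) : ℂ) * Complex.I ≠ 0 := by
      simp [Complex.I_ne_zero, Complex.ofReal_ne_zero, hξ]
    have hBne : ((-ξ : ℝ) : ℂ) * (-Complex.I) ≠ 0 := by
      simp [Complex.I_ne_zero, Complex.ofReal_ne_zero, hξ]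
    rw [l1, l2, Complex.cpow_def_of_ne_zero hAne, Complex.cpow_def_of_ne_zero hBne,
      hlogA, hlogB]
    have hrne : ((|ξ| : ℝ) : ℂ) ≠ 0 := by simp [habs, hξ]
    rw [Complex.cpow_def_of_ne_zero hrne, habs, ← Complex.ofReal_log hpos'.le]
    rw [show (↑(Real.log (-ξ)) + ↑Real.pi / 2 * Complex.I) * (-c)
        = ↑(Real.log (-ξ)) * (-c) + -(↑Real.pi * c / 2 * Complex.I) by ring,
      show (↑(Real.log (-ξ)) + -(↑Real.pi / 2) * Complex.I) * (-c)
        = ↑(Real.log (-ξ)) * (-c) + ↑Real.pi * c / 2 * Complex.I by ring,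
      Complex.exp_add, Complex.exp_add, hsign]
    push_cast
    linear_combination (-(Complex.Gamma c * Complex.exp (↑(Real.log (-ξ)) * (-c)))) * hsin
  · -- 0 < ξ
    have habs : |ξ| = ξ := abs_of_pos hpos
    have hsign : Real.sign ξ = 1 := Real.sign_of_pos hpos
    have l1 : (-(Complex.I * ξ) : ℂ) = ((ξ : ℝ) : ℂ) * (-Complex.I) := by push_cast; ring
    have l2 : (Complex.I * ξ : ℂ) = ((ξ : ℝ) : ℂ) * Complex.I := by push_cast; ring
    have hlogA : Complex.log (((ξ : ℝ) : ℂ) * (-Complex.I))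
        = ↑(Real.log ξ) + -(↑Real.pi / 2) * Complex.I := by
      rw [Complex.log_ofReal_mul hpos (by simp [Complex.I_ne_zero]), Complex.log_neg_I]
    have hlogB : Complex.log (((ξ : ℝ) : ℂ) * Complex.I)
        = ↑(Real.log ξ) + ↑Real.pi / 2 * Complex.I := by
      rw [Complex.log_ofReal_mul hpos Complex.I_ne_zero, Complex.log_I]
    have hAne : ((ξ : ℝ) : ℂ) * (-Complex.I) ≠ 0 := by
      simp [Complex.I_ne_zero, Complex.ofReal_ne_zero, hξ]
    have hBne : ((ξ : ℝ) : ℂ) * Complex.I ≠ 0 := by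
      simp [Complex.I_ne_zero, Complex.ofReal_ne_zero, hξ]
    rw [l1, l2, Complex.cpow_def_of_ne_zero hAne, Complex.cpow_def_of_ne_zero hBne,
      hlogA, hlogB]
    have hrne : ((|ξ| : ℝ) : ℂ) ≠ 0 := by simp [habs, hξ]
    rw [Complex.cpow_def_of_ne_zero hrne, habs, ← Complex.ofReal_log hpos.le]
    rw [show (↑(Real.log ξ) + -(↑Real.pi / 2) * Complex.I) * (-c)
        = ↑(Real.log ξ) * (-c) + ↑Real.pi * c / 2 * Complex.I by ring,
      show (↑(Real.log ξ) + ↑Real.pi / 2 * Complex.I) * (-c)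
        = ↑(Real.log ξ) * (-c) + -(↑Real.pi * c / 2 * Complex.I) by ring,
      Complex.exp_add, Complex.exp_add, hsign]
    push_cast
    linear_combination (Complex.Gamma c * Complex.exp (↑(Real.log ξ) * (-c))) * hsin

theorem fourier_sin_power_integral (nu : ℝ) (hnu0 : 0 < nu) (hnu1 : nu < 1)
    (s : ℂ) (hs0 : 0 < s.re) (hs1 : s.re < nu) (ξ : ℝ) (hξ : ξ ≠ 0) :
    Tendsto (fun R : ℝ => ∫ α in (-R)..R,
        Complex.exp (Complex.I * (α : ℂ) * (ξ : ℂ)) * (Real.sign α : ℂ)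
          * ((|α| : ℝ) : ℂ) ^ ((nu : ℂ) - s - 1))
      atTop
      (nhds (2 * Complex.I * Complex.Gamma ((nu : ℂ) - s)
        * Complex.sin (↑Real.pi * ((nu : ℂ) - s) / 2) * (Real.sign ξ : ℂ)
        * ((|ξ| : ℝ) : ℂ) ^ (s - (nu : ℂ)))) := by
  set c : ℂ := (nu : ℂ) - s with hcdef
  have hcre : c.re = nu - s.re := by simp [hcdef]
  have hc0 : 0 < c.re := by rw [hcre]; linarith
  have hc1 : c.re < 1 := by rw [hcre]; linarith
  have hcne1 : c ≠ 1 := by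
    intro h; rw [h] at hc1; norm_num at hc1
  have hcm1 : c - 1 ≠ 0 := by
    intro h
    have := congrArg Complex.re h
    simp at this
    rw [hcre] at this; linarith
  set g : ℝ → ℂ := fun α => Complex.exp (Complex.I * (α : ℂ) * (ξ : ℂ)) * (Real.sign α : ℂ)
    * ((|α| : ℝ) : ℂ) ^ (c - 1) with hgdef
  set zA : ℂ := -(Complex.I * ξ) with hzAdef
  set zB : ℂ := Complex.I * ξ with hzBdef
  have hzB0 : zB ≠ 0 := by
    rw [hzBdef]
    exact mul_ne_zero Complex.I_ne_zero (Complex.ofReal_ne_zero.mpr hξ)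
  have hzBre : zB.re = 0 := by rw [hzBdef]; simp
  have hzAre : zA.re = 0 := by rw [hzAdef]; simp [hzBre]
  have hzA0 : zA ≠ 0 := by rw [hzAdef]; exact neg_ne_zero.mpr hzB0
  set fA : ℝ → ℂ := fun t => (t : ℂ) ^ (c - 1) * Complex.exp (-(zA * t)) with hfAdef
  set fB : ℝ → ℂ := fun t => (t : ℂ) ^ (c - 1) * Complex.exp (-(zB * t)) with hfBdef
  have hA := aux_tendsto hc0 hc1 hzAre hzA0
  have hB := aux_tendsto hc0 hc1 hzBre hzB0
  have htend : Tendsto (fun R : ℝ => (∫ t in (0:ℝ)..R, fA t) - ∫ t in (0:ℝ)..R, fB t)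
      atTop (nhds (Complex.Gamma c * (zA ^ (-c) - zB ^ (-c)))) := by
    rw [mul_sub]
    exact hA.sub hB
  -- pointwise identities
  have hgA : ∀ t : ℝ, 0 ≤ t → g t = fA t := by
    intro t ht
    rcases eq_or_lt_of_le ht with h | h
    · rw [← h]
      simp [hgdef, hfAdef, Complex.zero_cpow hcm1]
    · rw [hgdef, hfAdef]
      simp only []
      rw [Real.sign_of_pos h, abs_of_pos h]
      rw [show -(zA * (t:ℂ)) = Complex.I * (t:ℂ) * (ξ:ℂ) by rw [hzAdef]; ring]
      push_cast
      ring
  have hgB : ∀ t : ℝ, 0 ≤ t → g (-t) = -fB t := by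
    intro t ht
    rcases eq_or_lt_of_le ht with h | h
    · rw [← h]
      simp [hgdef, hfBdef, Complex.zero_cpow hcm1]
    · rw [hgdef, hfBdef]
      simp only []
      rw [Real.sign_of_neg (by linarith : -t < 0), abs_of_neg (by linarith : -t < 0)]
      rw [show -(zB * (t:ℂ)) = Complex.I * ((-t:ℝ):ℂ) * (ξ:ℂ) by rw [hzBdef]; push_cast; ring]
      push_cast
      ring
  -- integrability
  have hintA : ∀ R : ℝ, IntervalIntegrable fA volume 0 R := by
    intro R
    apply IntervalIntegrable.mul_continuousOn
    · apply intervalIntegral.intervalIntegrable_cpow'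
      simp [hcre]; linarith
    · apply Continuous.continuousOn
      exact Complex.continuous_exp.comp ((continuous_const.mul Complex.continuous_ofReal).neg)
  have hintB : ∀ R : ℝ, IntervalIntegrable fB volume 0 R := by
    intro R
    apply IntervalIntegrable.mul_continuousOn
    · apply intervalIntegral.intervalIntegrable_cpow'
      simp [hcre]; linarith
    · apply Continuous.continuousOn
      exact Complex.continuous_exp.comp ((continuous_const.mul Complex.continuous_ofReal).neg)
  -- eventual equality of the two integral expressions
  have hev : ∀ᶠ R : ℝ in atTop, (∫ t in (0:ℝ)..R, fA t) - (∫ t in (0:ℝ)..R, fB t)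
      = ∫ α in (-R)..R, g α := by
    filter_upwards [eventually_ge_atTop (0:ℝ)] with R hR
    have huIcc : Set.uIcc (0:ℝ) R = Set.Icc 0 R := Set.uIcc_of_le hR
    have hEA : Set.EqOn g fA (Set.uIcc (0:ℝ) R) := by
      intro t ht
      rw [huIcc] at ht
      exact hgA t ht.1
    have hEB : Set.EqOn (fun t => g (-t)) (fun t => -fB t) (Set.uIcc (0:ℝ) R) := by
      intro t ht
      rw [huIcc] at ht
      exact hgB t ht.1
    have h1 : ∫ t in (0:ℝ)..R, g t = ∫ t in (0:ℝ)..R, fA t :=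
      intervalIntegral.integral_congr hEA
    have h2 : ∫ α in (-R)..(0:ℝ), g α = -(∫ t in (0:ℝ)..R, fB t) := by
      have h3 : (∫ t in (0:ℝ)..R, g (-t)) = ∫ α in (-R)..(-(0:ℝ)), g α :=
        intervalIntegral.integral_comp_neg g
      have h4 : (∫ t in (0:ℝ)..R, g (-t)) = ∫ t in (0:ℝ)..R, -fB t :=
        intervalIntegral.integral_congr hEB
      rw [intervalIntegral.integral_neg] at h4
      rw [← h4, h3, neg_zero]
    have hgIA : IntervalIntegrable g volume 0 R := by
      rw [intervalIntegrable_iff_integrableOn_Ioc_of_le hR]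
      have h := (intervalIntegrable_iff_integrableOn_Ioc_of_le hR).mp (hintA R)
      exact h.congr_fun (fun t ht => (hgA t ht.1.le).symm) measurableSet_Ioc
    have hgIB : IntervalIntegrable g volume (-R) 0 := by
      have h5 : IntervalIntegrable (fun t => -fB t) volume 0 R := (hintB R).neg
      have h6 : IntervalIntegrable (fun t => g (-t)) volume 0 R := by
        rw [intervalIntegrable_iff_integrableOn_Ioc_of_le hR] at h5 ⊢
        exact h5.congr_fun (fun t ht => (hgB t ht.1.le).symm) measurableSet_Ioc
      exact (IntervalIntegrable.iff_comp_neg).mpr (by simpa using h6.symm)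
    have hadd := intervalIntegral.integral_add_adjacent_intervals hgIB hgIA
    rw [← hadd, h1, h2]
    ring
  -- conclude
  have hconst := aux_const hcne1 hξ
  have hfinal : Complex.Gamma c * (zA ^ (-c) - zB ^ (-c))
      = 2 * Complex.I * Complex.Gamma c * Complex.sin (↑Real.pi * c / 2) * (Real.sign ξ : ℂ)
        * ((|ξ| : ℝ) : ℂ) ^ (s - (nu:ℂ)) := by
    rw [show s - (nu:ℂ) = -c by rw [hcdef]; ring]
    exact hconst
  have hres := htend.congr' hev
  rw [hfinal] at hres
  exact hres
end

section
/- Let x > 0 be real, let δ ∈ ℝ with δ ≠ 0, and let κ ∈ (0,1). Then both integrals below converge absolutely and ∫₀¹ y^{iδ}/(y + x) dy = (1/2)·∫_{−∞}^{∞} x^{−(κ+it)} / ((iδ + κ + it)·sin(π(κ + it))) dt. -/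
open MeasureTheory Filter Complex Set Real

-- sin lower bound
lemma sin_pi_lb (κ t : ℝ) (hκ0 : 0 < κ) (hκ1 : κ < 1) :
    Real.sin (π * κ) * Real.cosh (π * t)
      ≤ ‖Complex.sin (↑π * ((κ : ℂ) + (t : ℂ) * Complex.I))‖ := by
  have heq : Complex.sin (↑π * ((κ : ℂ) + (t : ℂ) * Complex.I))
      = (Real.sin (π * κ) * Real.cosh (π * t) : ℝ)
        + (Real.cos (π * κ) * Real.sinh (π * t) : ℝ) * Complex.I := by
    rw [show (↑π * ((κ : ℂ) + (t : ℂ) * Complex.I)) = ((π * κ : ℝ) : ℂ)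
        + ((π * t : ℝ) : ℂ) * Complex.I by push_cast; ring]
    rw [Complex.sin_add, Complex.cos_mul_I, Complex.sin_mul_I]
    push_cast [Complex.ofReal_sin, Complex.ofReal_cos, Complex.ofReal_cosh, Complex.ofReal_sinh]
    ring
  have hre : (Complex.sin (↑π * ((κ : ℂ) + (t : ℂ) * Complex.I))).re
      = Real.sin (π * κ) * Real.cosh (π * t) := by
    simp only [heq, Complex.add_re, Complex.ofReal_re, Complex.mul_I_re, Complex.ofReal_im,
      neg_zero, add_zero]
  calc Real.sin (π * κ) * Real.cosh (π * t) = (Complex.sin (↑π * ((κ:ℂ) + (t:ℂ) * Complex.I))).re := hre.symm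
    _ ≤ |(Complex.sin (↑π * ((κ:ℂ) + (t:ℂ) * Complex.I))).re| := le_abs_self _
    _ ≤ _ := Complex.abs_re_le_norm _

lemma cosh_lb (t : ℝ) : (1 + t ^ 2) / 8 ≤ Real.cosh (π * t) := by
  have h1 : Real.exp |t| ≥ (1 + t ^ 2) / 4 := by
    have h2 : Real.exp |t| = (Real.exp (|t| / 2)) ^ 2 := by
      rw [sq, ← Real.exp_add]; ring_nf
    have h3 : (1 + |t| / 2) ≤ Real.exp (|t| / 2) := by
      have := Real.add_one_le_exp (|t| / 2); linarith
    nlinarith [abs_nonneg t, _root_.sq_abs t, Real.exp_pos (|t| / 2)]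
  have h4 : Real.exp |t| ≤ Real.exp (π * |t|) :=
    Real.exp_le_exp.2 (by nlinarith [abs_nonneg t, Real.pi_gt_three])
  have h5 : Real.exp (π * |t|) ≤ 2 * Real.cosh (π * t) := by
    rcases abs_cases t with ⟨h, _⟩ | ⟨h, _⟩
    · rw [h, Real.cosh_eq]; nlinarith [Real.exp_pos (-(π * t))]
    · rw [h, Real.cosh_eq]
      rw [show π * -t = -(π * t) by ring]
      nlinarith [Real.exp_pos (π * t)]
  nlinarith

lemma sin_pi_pos (κ : ℝ) (hκ0 : 0 < κ) (hκ1 : κ < 1) : 0 < Real.sin (π * κ) :=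
  Real.sin_pos_of_pos_of_lt_pi (by positivity) (by nlinarith [Real.pi_pos])

lemma sin_lb (κ t : ℝ) (hκ0 : 0 < κ) (hκ1 : κ < 1) :
    Real.sin (π * κ) * ((1 + t ^ 2) / 8)
      ≤ ‖Complex.sin (↑π * ((κ : ℂ) + (t : ℂ) * Complex.I))‖ := by
  refine le_trans ?_ (sin_pi_lb κ t hκ0 hκ1)
  exact mul_le_mul_of_nonneg_left (cosh_lb t) (sin_pi_pos κ hκ0 hκ1).le

lemma sin_ne_zero' (κ t : ℝ) (hκ0 : 0 < κ) (hκ1 : κ < 1) :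
    Complex.sin (↑π * ((κ : ℂ) + (t : ℂ) * Complex.I)) ≠ 0 := by
  intro h
  have := sin_lb κ t hκ0 hκ1
  rw [h, norm_zero] at this
  nlinarith [sin_pi_pos κ hκ0 hκ1, sq_nonneg t]

noncomputable def f₀ : ℝ → ℂ := fun v => ((1 : ℂ) + (v : ℂ))⁻¹

lemma cpow_ofReal_div (a b : ℝ) (ha : 0 < a) (hb : 0 < b) (w : ℂ) :
    ((a / b : ℝ) : ℂ) ^ w = (a : ℂ) ^ w * ((b : ℂ) ^ w)⁻¹ := by
  rw [div_eq_mul_inv, Complex.ofReal_mul, Complex.ofReal_inv,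
    show ((a : ℂ) * (b : ℂ)⁻¹) = ((a : ℂ) * ((b⁻¹ : ℝ) : ℂ)) by push_cast; ring,
    mul_cpow_ofReal_nonneg ha.le (inv_nonneg.2 hb.le), Complex.ofReal_inv,
    Complex.inv_cpow _ _ (by rw [Complex.arg_ofReal_of_nonneg hb.le]; exact Real.pi_ne_zero.symm)]

lemma map_Ioo : (fun x : ℝ => x / (1 - x)) '' Ioo 0 1 = Ioi 0 := by
  ext u
  constructor
  · rintro ⟨x, ⟨hx0, hx1⟩, rfl⟩
    exact div_pos hx0 (by linarith)
  · intro hu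
    have hu' : (0 : ℝ) < u := hu
    refine ⟨u / (1 + u), ⟨div_pos hu' (by linarith), (div_lt_one (by linarith)).2 (by linarith)⟩, ?_⟩
    have h1 : (1 : ℝ) + u ≠ 0 := by positivity
    field_simp
    ring

lemma injOn_Ioo : InjOn (fun x : ℝ => x / (1 - x)) (Ioo 0 1) := by
  rintro a ⟨ha0, ha1⟩ b ⟨hb0, hb1⟩ h
  have ha : (1 : ℝ) - a ≠ 0 := by intro h'; linarith [h'] 
  have hb : (1 : ℝ) - b ≠ 0 := by intro h'; linarith [h']
  field_simp at h
  nlinarith [h]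

lemma deriv_Ioo : ∀ x ∈ Ioo (0:ℝ) 1, HasDerivWithinAt (fun x : ℝ => x / (1 - x))
    (((1 - x) ^ 2)⁻¹) (Ioo 0 1) x := by
  intro x ⟨hx0, hx1⟩
  have h1x : (1 : ℝ) - x ≠ 0 := by intro h'; linarith [h']
  have := (hasDerivAt_id x).div ((hasDerivAt_id x).const_sub 1) h1x
  convert this.hasDerivWithinAt using 1
  all_goals try rfl
  simp only [id]
  field_simp
  ring

lemma key_pointwise {s : ℂ} : ∀ x ∈ Ioo (0:ℝ) 1,
    |((1 - x) ^ 2)⁻¹| • (((x / (1 - x) : ℝ) : ℂ) ^ (s - 1) • f₀ (x / (1 - x)))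
      = (x : ℂ) ^ (s - 1) * (1 - (x : ℂ)) ^ (1 - s - 1) := by
  intro x ⟨hx0, hx1⟩
  have h1x : (0 : ℝ) < 1 - x := by linarith
  have hc : ((1 : ℂ) - (x : ℂ)) ≠ 0 := by
    rw [show ((1:ℂ) - (x:ℂ)) = ((1 - x : ℝ) : ℂ) by push_cast; ring]
    exact_mod_cast h1x.ne'
  have hf : f₀ (x / (1 - x)) = 1 - (x : ℂ) := by
    simp only [f₀]
    rw [show ((1:ℂ) + ((x / (1-x) : ℝ) : ℂ)) = ((1 - x : ℝ) : ℂ)⁻¹ by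
      push_cast; field_simp; ring]
    rw [inv_inv]; push_cast; ring
  rw [hf, cpow_ofReal_div x (1 - x) hx0 h1x, smul_eq_mul, Complex.real_smul,
    abs_of_pos (by positivity : (0:ℝ) < ((1 - x) ^ 2)⁻¹)]
  have e1 : ((1 : ℂ) - (x : ℂ)) ^ (1 - s - 1)
      = ((((1 - x : ℝ) : ℂ)) ^ (s - 1))⁻¹ * ((1 : ℂ) - (x : ℂ))⁻¹ := by
    rw [show ((1 - x : ℝ) : ℂ) = (1 : ℂ) - (x : ℂ) by push_cast; ring]
    rw [show (1 - s - 1 : ℂ) = -(s - 1) + -1 by ring, Complex.cpow_add _ _ hc,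
      Complex.cpow_neg, Complex.cpow_neg_one]
  rw [e1]
  have hcast : (((1 - x) ^ 2 : ℝ)⁻¹ : ℂ) = (((1 : ℂ) - (x : ℂ)) ^ 2)⁻¹ := by push_cast; ring
  push_cast
  have hpow : ((1 : ℂ) - (x : ℂ)) ^ (s - 1) ≠ 0 := by
    intro h; exact hc (Complex.cpow_eq_zero_iff _ _ |>.1 h).1
  field_simp

lemma hasMellin_f₀ {s : ℂ} (hs0 : 0 < s.re) (hs1 : s.re < 1) :
    HasMellin f₀ s ((π : ℂ) / Complex.sin ((π : ℂ) * s)) := by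
  have h1s : 0 < (1 - s).re := by simp [Complex.sub_re]; linarith
  have hbeta : IntegrableOn (fun x : ℝ => (x : ℂ) ^ (s - 1) * (1 - (x : ℂ)) ^ (1 - s - 1))
      (Ioo 0 1) := by
    have := (Complex.betaIntegral_convergent hs0 h1s)
    rw [intervalIntegrable_iff_integrableOn_Ioc_of_le zero_le_one] at this
    exact this.mono_set Ioo_subset_Ioc_self
  have hconv : MellinConvergent f₀ s := by
    rw [MellinConvergent, ← map_Ioo]
    exact (integrableOn_image_iff_integrableOn_abs_deriv_smul measurableSet_Ioo deriv_Ioo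
      injOn_Ioo _).2 (hbeta.congr_fun (fun x hx => (key_pointwise x hx).symm) measurableSet_Ioo)
  refine ⟨hconv, ?_⟩
  rw [mellin, ← map_Ioo,
    integral_image_eq_integral_abs_deriv_smul measurableSet_Ioo deriv_Ioo injOn_Ioo,
    setIntegral_congr_fun measurableSet_Ioo key_pointwise]
  have hb2 : Complex.betaIntegral s (1 - s) = (π : ℂ) / Complex.sin ((π : ℂ) * s) := by
    have h := Complex.Gamma_mul_Gamma_eq_betaIntegral hs0 h1s
    rw [show s + (1 - s) = 1 by ring, Complex.Gamma_one, one_mul] at h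
    rw [← h, Complex.Gamma_mul_Gamma_one_sub]
  rw [← hb2, Complex.betaIntegral, intervalIntegral.integral_of_le zero_le_one,
    ← integral_Ioc_eq_integral_Ioo]

lemma mellin_f₀_eq (κ : ℝ) (hκ0 : 0 < κ) (hκ1 : κ < 1) (t : ℝ) :
    mellin f₀ ((κ : ℂ) + (t : ℂ) * Complex.I)
      = (π : ℂ) / Complex.sin ((π : ℂ) * ((κ : ℂ) + (t : ℂ) * Complex.I)) :=
  (hasMellin_f₀ (s := (κ : ℂ) + (t : ℂ) * Complex.I) (by simp [hκ0]) (by simp [hκ1])).2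

lemma vert_f₀ (κ : ℝ) (hκ0 : 0 < κ) (hκ1 : κ < 1) :
    Complex.VerticalIntegrable (mellin f₀) κ := by
  rw [Complex.VerticalIntegrable]
  have hrw : (fun t : ℝ => mellin f₀ ((κ : ℂ) + (t : ℂ) * Complex.I))
      = fun t : ℝ => (π : ℂ) / Complex.sin ((π : ℂ) * ((κ : ℂ) + (t : ℂ) * Complex.I)) :=
    funext fun t => mellin_f₀_eq κ hκ0 hκ1 t
  rw [hrw]
  have hsin := sin_pi_pos κ hκ0 hκ1
  refine (integrable_inv_one_add_sq.const_mul (8 * π / Real.sin (π * κ))).mono' ?_ ?_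
  · apply Continuous.aestronglyMeasurable
    exact continuous_const.div
      (Complex.continuous_sin.comp (continuous_const.mul
        (continuous_const.add (Complex.continuous_ofReal.mul continuous_const))))
      (fun t => sin_ne_zero' κ t hκ0 hκ1)
  · refine Filter.Eventually.of_forall fun t => ?_
    have hlb := sin_lb κ t hκ0 hκ1
    have hB : 0 < Real.sin (π * κ) * ((1 + t ^ 2) / 8) := by positivity
    rw [norm_div, Complex.norm_real, Real.norm_eq_abs, abs_of_pos Real.pi_pos]
    calc π / ‖Complex.sin ((π:ℂ) * ((κ:ℂ) + (t:ℂ) * Complex.I))‖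
        ≤ π / (Real.sin (π * κ) * ((1 + t ^ 2) / 8)) := by
          gcongr
      _ = 8 * π / Real.sin (π * κ) * (1 + t ^ 2)⁻¹ := by
          field_simp

lemma mellin_inv_f₀ (κ : ℝ) (hκ0 : 0 < κ) (hκ1 : κ < 1) (u : ℝ) (hu : 0 < u) :
    ∫ t : ℝ, (u : ℂ) ^ (-((κ : ℂ) + (t : ℂ) * Complex.I))
        / Complex.sin ((π : ℂ) * ((κ : ℂ) + (t : ℂ) * Complex.I))
      = 2 * ((1 : ℂ) + (u : ℂ))⁻¹ := by
  have hcont : ContinuousAt f₀ u := by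
    apply ContinuousAt.inv₀
    · exact (continuous_const.add Complex.continuous_ofReal).continuousAt
    · intro h
      have : (0:ℝ) < 1 + u := by linarith
      rw [show ((1:ℂ) + (u:ℂ)) = ((1 + u : ℝ) : ℂ) by push_cast; ring] at h
      exact this.ne' (by exact_mod_cast h)
  have hconv : MellinConvergent f₀ (κ : ℂ) :=
    (hasMellin_f₀ (s := (κ : ℂ)) (by simp [hκ0]) (by simp [hκ1])).1
  have h := mellinInv_mellin_eq κ f₀ hu hconv (vert_f₀ κ hκ0 hκ1) hcont
  rw [mellinInv] at h
  have hrw : (fun t : ℝ => (u : ℂ) ^ (-((κ:ℂ) + (t:ℂ) * Complex.I)) •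
        mellin f₀ ((κ:ℂ) + (t:ℂ) * Complex.I))
      = fun t : ℝ => (π : ℂ) * ((u : ℂ) ^ (-((κ:ℂ) + (t:ℂ) * Complex.I))
        / Complex.sin ((π:ℂ) * ((κ:ℂ) + (t:ℂ) * Complex.I))) := by
    funext t
    rw [mellin_f₀_eq κ hκ0 hκ1 t, smul_eq_mul]
    ring
  rw [hrw, integral_const_mul, f₀] at h
  rw [Complex.real_smul] at h
  have hπ : (π : ℂ) ≠ 0 := by exact_mod_cast Real.pi_ne_zero
  have h2 : ((1 / (2 * π) : ℝ) : ℂ) * (π : ℂ) = 1 / 2 := by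
    push_cast
    field_simp
  rw [← mul_assoc, h2] at h
  linear_combination 2 * h

lemma conj1 (x δ : ℝ) (hx : 0 < x) :
    IntegrableOn (fun y : ℝ => (y : ℂ) ^ (Complex.I * (δ : ℂ)) / ((y : ℂ) + (x : ℂ)))
      (Set.Ioc 0 1) := by
  have hne : ∀ y : ℝ, 0 < y → ((y : ℂ) + (x : ℂ)) ≠ 0 := by
    intro y hy h
    have : (0:ℝ) < y + x := by linarith
    rw [show ((y:ℂ) + (x:ℂ)) = ((y + x : ℝ) : ℂ) by push_cast; ring] at h
    exact this.ne' (by exact_mod_cast h)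
  refine Integrable.mono' (g := fun _ : ℝ => x⁻¹)
    (integrableOn_const measure_Ioc_lt_top.ne) ?_ ?_
  · apply ContinuousOn.aestronglyMeasurable ?_ measurableSet_Ioc
    intro y hy
    apply ContinuousAt.continuousWithinAt
    apply ContinuousAt.div
    · exact (continuousAt_cpow_const (Complex.ofReal_mem_slitPlane.2 hy.1)).comp
        Complex.continuous_ofReal.continuousAt
    · exact (Complex.continuous_ofReal.add continuous_const).continuousAt
    · exact hne y hy.1
  · rw [ae_restrict_iff' measurableSet_Ioc]
    refine Filter.Eventually.of_forall fun y hy => ?_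
    rw [norm_div, Complex.norm_cpow_eq_rpow_re_of_pos hy.1]
    have h1 : (Complex.I * (δ:ℂ)).re = 0 := by simp
    rw [h1, Real.rpow_zero]
    rw [show ((y:ℂ) + (x:ℂ)) = ((y + x : ℝ) : ℂ) by push_cast; ring, Complex.norm_real, Real.norm_eq_abs,
      abs_of_pos (by linarith [hy.1] : (0:ℝ) < y + x)]
    rw [one_div]
    exact inv_anti₀ hx (by linarith [hy.1])

lemma w_re (δ κ t : ℝ) : (Complex.I * (δ:ℂ) + (κ:ℂ) + (t:ℂ) * Complex.I).re = κ := by simp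

lemma w_ne (δ κ t : ℝ) (hκ0 : 0 < κ) :
    Complex.I * (δ:ℂ) + (κ:ℂ) + (t:ℂ) * Complex.I ≠ 0 := by
  intro h
  have := w_re δ κ t
  rw [h] at this
  simp at this
  exact hκ0.ne' this.symm

lemma w_abs (δ κ t : ℝ) (hκ0 : 0 < κ) :
    κ ≤ ‖Complex.I * (δ:ℂ) + (κ:ℂ) + (t:ℂ) * Complex.I‖ := by
  calc κ = (Complex.I * (δ:ℂ) + (κ:ℂ) + (t:ℂ) * Complex.I).re := (w_re δ κ t).symm
    _ ≤ |(Complex.I * (δ:ℂ) + (κ:ℂ) + (t:ℂ) * Complex.I).re| := le_abs_self _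
    _ ≤ _ := Complex.abs_re_le_norm _

lemma x_cpow_abs (x κ t : ℝ) (hx : 0 < x) :
    ‖(x:ℂ) ^ (-((κ:ℂ) + (t:ℂ) * Complex.I))‖ = x ^ (-κ) := by
  rw [Complex.norm_cpow_eq_rpow_re_of_pos hx]
  congr 1
  simp

lemma conj2 (x δ κ : ℝ) (hx : 0 < x) (hκ0 : 0 < κ) (hκ1 : κ < 1) :
    Integrable (fun t : ℝ => (x : ℂ) ^ (-((κ : ℂ) + (t : ℂ) * Complex.I))
      / ((Complex.I * (δ : ℂ) + (κ : ℂ) + (t : ℂ) * Complex.I)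
        * Complex.sin (↑Real.pi * ((κ : ℂ) + (t : ℂ) * Complex.I)))) := by
  have hsin := sin_pi_pos κ hκ0 hκ1
  refine (integrable_inv_one_add_sq.const_mul (8 * x ^ (-κ) / (κ * Real.sin (π * κ)))).mono'
    ?_ ?_
  · apply Continuous.aestronglyMeasurable
    apply Continuous.div
    · refine continuous_iff_continuousAt.2 fun t => ?_
      exact (continuousAt_const_cpow (Complex.ofReal_ne_zero.2 hx.ne')).comp
        (Continuous.continuousAt (by continuity))
    · exact ((continuous_const.add (Complex.continuous_ofReal.mul continuous_const)).mul
        (Complex.continuous_sin.comp (continuous_const.mul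
          (continuous_const.add (Complex.continuous_ofReal.mul continuous_const)))))
    · intro t
      exact mul_ne_zero (w_ne δ κ t hκ0) (sin_ne_zero' κ t hκ0 hκ1)
  · refine Filter.Eventually.of_forall fun t => ?_
    rw [norm_div, x_cpow_abs x κ t hx, norm_mul]
    have hB : 0 < κ * (Real.sin (π * κ) * ((1 + t ^ 2) / 8)) := by positivity
    calc x ^ (-κ) / (‖Complex.I * (δ:ℂ) + (κ:ℂ) + (t:ℂ) * Complex.I‖
            * ‖Complex.sin (↑π * ((κ:ℂ) + (t:ℂ) * Complex.I))‖)
        ≤ x ^ (-κ) / (κ * (Real.sin (π * κ) * ((1 + t ^ 2) / 8))) := by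
          gcongr
          · exact w_abs δ κ t hκ0
          · exact sin_lb κ t hκ0 hκ1
      _ = 8 * x ^ (-κ) / (κ * Real.sin (π * κ)) * (1 + t ^ 2)⁻¹ := by
          field_simp

lemma inner_y (x δ κ : ℝ) (hx : 0 < x) (hκ0 : 0 < κ) (hκ1 : κ < 1)
    {y : ℝ} (hy : y ∈ Set.Ioc (0:ℝ) 1) :
    (y : ℂ) ^ (Complex.I * (δ : ℂ)) / ((y : ℂ) + (x : ℂ))
      = ∫ t : ℝ, (y : ℂ) ^ (Complex.I * (δ:ℂ) + (κ:ℂ) + (t:ℂ) * Complex.I - 1)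
          * ((1/2 : ℂ) * (x:ℂ) ^ (-((κ:ℂ) + (t:ℂ) * Complex.I))
            / Complex.sin ((π:ℂ) * ((κ:ℂ) + (t:ℂ) * Complex.I))) := by
  have hy0 : 0 < y := hy.1
  have hyC : (y : ℂ) ≠ 0 := Complex.ofReal_ne_zero.2 hy0.ne'
  have hyxC : ((y:ℂ) + (x:ℂ)) ≠ 0 := by
    intro h
    have : (0:ℝ) < y + x := by linarith
    rw [show ((y:ℂ) + (x:ℂ)) = ((y + x : ℝ) : ℂ) by push_cast; ring] at h
    exact this.ne' (by exact_mod_cast h)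
  have hA := mellin_inv_f₀ κ hκ0 hκ1 (x / y) (div_pos hx hy0)
  have hpt : ∀ t : ℝ, (y : ℂ) ^ (Complex.I * (δ:ℂ) + (κ:ℂ) + (t:ℂ) * Complex.I - 1)
        * ((1/2 : ℂ) * (x:ℂ) ^ (-((κ:ℂ) + (t:ℂ) * Complex.I))
          / Complex.sin ((π:ℂ) * ((κ:ℂ) + (t:ℂ) * Complex.I)))
      = ((1/2 : ℂ) * (y:ℂ) ^ (Complex.I * (δ:ℂ) - 1))
        * (((x / y : ℝ) : ℂ) ^ (-((κ:ℂ) + (t:ℂ) * Complex.I))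
          / Complex.sin ((π:ℂ) * ((κ:ℂ) + (t:ℂ) * Complex.I))) := by
    intro t
    rw [cpow_ofReal_div x y hx hy0, Complex.cpow_neg ((y:ℂ)) (((κ:ℂ) + (t:ℂ) * Complex.I)),
      inv_inv]
    rw [show (Complex.I * (δ:ℂ) + (κ:ℂ) + (t:ℂ) * Complex.I - 1
        : ℂ) = (Complex.I * (δ:ℂ) - 1) + ((κ:ℂ) + (t:ℂ) * Complex.I) by ring,
      Complex.cpow_add _ _ hyC]
    ring
  simp_rw [hpt]
  rw [integral_const_mul, hA]
  have h1 : ((1:ℂ) + ((x / y : ℝ) : ℂ))⁻¹ = (y:ℂ) * ((y:ℂ) + (x:ℂ))⁻¹ := by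
    push_cast
    rw [show ((1:ℂ) + (x:ℂ) / (y:ℂ)) = ((y:ℂ) + (x:ℂ)) / (y:ℂ) by field_simp]
    rw [inv_div]
    field_simp
  rw [h1]
  have h2 : (y:ℂ) ^ (Complex.I * (δ:ℂ) - 1) * (y:ℂ) = (y:ℂ) ^ (Complex.I * (δ:ℂ)) := by
    rw [Complex.cpow_sub _ _ hyC, Complex.cpow_one]
    field_simp
  rw [div_eq_mul_inv]
  rw [← h2]
  ring

lemma inner_t (δ κ : ℝ) (hκ0 : 0 < κ) (t : ℝ) :
    ∫ y in Set.Ioc (0:ℝ) 1, (y : ℂ) ^ (Complex.I * (δ:ℂ) + (κ:ℂ) + (t:ℂ) * Complex.I - 1)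
      = 1 / (Complex.I * (δ:ℂ) + (κ:ℂ) + (t:ℂ) * Complex.I) := by
  set w : ℂ := Complex.I * (δ:ℂ) + (κ:ℂ) + (t:ℂ) * Complex.I with hw
  have hre : (w - 1).re = κ - 1 := by rw [hw]; simp
  have h := (hasMellin_cpow_Ioc (w - 1) (s := 1) (by rw [hre]; simp; linarith)).2
  rw [mellin] at h
  simp only [sub_self, Complex.cpow_zero, one_smul] at h
  rw [setIntegral_indicator measurableSet_Ioc,
    Set.inter_eq_self_of_subset_right (fun z hz => hz.1)] at h
  rw [h]
  congr 1
  ring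

lemma G_integrable (x δ κ : ℝ) (hx : 0 < x) (hκ0 : 0 < κ) (hκ1 : κ < 1) :
    Integrable (fun p : ℝ × ℝ =>
        (p.1 : ℂ) ^ (Complex.I * (δ:ℂ) + (κ:ℂ) + (p.2:ℂ) * Complex.I - 1)
          * ((1/2 : ℂ) * (x:ℂ) ^ (-((κ:ℂ) + (p.2:ℂ) * Complex.I))
            / Complex.sin ((π:ℂ) * ((κ:ℂ) + (p.2:ℂ) * Complex.I))))
      ((volume.restrict (Set.Ioc 0 1)).prod volume) := by
  have hsin := sin_pi_pos κ hκ0 hκ1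
  have hmeas : (volume.restrict (Set.Ioc (0:ℝ) 1)).prod (volume : Measure ℝ)
      = ((volume : Measure ℝ).prod (volume : Measure ℝ)).restrict
          (Set.Ioc (0:ℝ) 1 ×ˢ Set.univ) := by
    rw [← Measure.prod_restrict, Measure.restrict_univ]
  have hyint : IntegrableOn (fun y : ℝ => y ^ (κ - 1)) (Set.Ioc (0:ℝ) 1) := by
    have := intervalIntegral.intervalIntegrable_rpow' (a := (0:ℝ)) (b := 1)
      (show (-1:ℝ) < κ - 1 by linarith)
    rwa [intervalIntegrable_iff_integrableOn_Ioc_of_le zero_le_one] at this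
  have htint : Integrable (fun t : ℝ => 4 * x ^ (-κ) / Real.sin (π * κ) * (1 + t ^ 2)⁻¹) :=
    integrable_inv_one_add_sq.const_mul _
  refine Integrable.mono' (hyint.mul_prod htint) ?_ ?_
  · rw [hmeas]
    refine ContinuousOn.aestronglyMeasurable ?_ (measurableSet_Ioc.prod MeasurableSet.univ)
    intro p hp
    have hp1 : 0 < p.1 := hp.1.1
    apply ContinuousAt.continuousWithinAt
    apply ContinuousAt.mul
    · have hf : ContinuousAt (fun q : ℝ × ℝ =>
          (((q.1:ℂ)), Complex.I * (δ:ℂ) + (κ:ℂ) + (q.2:ℂ) * Complex.I - 1)) p :=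
        ((Complex.continuous_ofReal.comp continuous_fst).prodMk
          (by continuity)).continuousAt
      exact (continuousAt_cpow (Complex.ofReal_mem_slitPlane.2 hp1)).comp hf
    · apply ContinuousAt.div
      · apply ContinuousAt.mul continuousAt_const
        exact (continuousAt_const_cpow (Complex.ofReal_ne_zero.2 hx.ne')).comp
          (Continuous.continuousAt (by continuity))
      · exact (Complex.continuous_sin.comp (by continuity)).continuousAt
      · exact sin_ne_zero' κ p.2 hκ0 hκ1
  · rw [hmeas, ae_restrict_iff' (measurableSet_Ioc.prod MeasurableSet.univ)]
    refine Filter.Eventually.of_forall fun p hp => ?_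
    have hp1 : 0 < p.1 := hp.1.1
    rw [norm_mul, norm_div, norm_mul,
      Complex.norm_cpow_eq_rpow_re_of_pos hp1, x_cpow_abs x κ p.2 hx]
    have hre : (Complex.I * (δ:ℂ) + (κ:ℂ) + (p.2:ℂ) * Complex.I - 1).re = κ - 1 := by simp
    rw [hre]
    have habs12 : ‖(1/2 : ℂ)‖ = 1/2 := by norm_num
    rw [habs12]
    have hB : 0 < Real.sin (π * κ) * ((1 + p.2 ^ 2) / 8) := by positivity
    have hstep : 1/2 * x ^ (-κ) / ‖Complex.sin ((π:ℂ) * ((κ:ℂ) + (p.2:ℂ) * Complex.I))‖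
        ≤ 4 * x ^ (-κ) / Real.sin (π * κ) * (1 + p.2 ^ 2)⁻¹ := by
      calc 1/2 * x ^ (-κ) / ‖Complex.sin ((π:ℂ) * ((κ:ℂ) + (p.2:ℂ) * Complex.I))‖
          ≤ 1/2 * x ^ (-κ) / (Real.sin (π * κ) * ((1 + p.2 ^ 2) / 8)) := by
            gcongr
            exact sin_lb κ p.2 hκ0 hκ1
        _ = 4 * x ^ (-κ) / Real.sin (π * κ) * (1 + p.2 ^ 2)⁻¹ := by
            field_simp; ring
    calc p.1 ^ (κ - 1) * (1/2 * x ^ (-κ)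
          / ‖Complex.sin ((π:ℂ) * ((κ:ℂ) + (p.2:ℂ) * Complex.I))‖)
        ≤ p.1 ^ (κ - 1) * (4 * x ^ (-κ) / Real.sin (π * κ) * (1 + p.2 ^ 2)⁻¹) := by
          gcongr
      _ = _ := rfl

theorem mellin_barnes_representation (x δ κ : ℝ) (hx : 0 < x) (hδ : δ ≠ 0)
    (hκ0 : 0 < κ) (hκ1 : κ < 1) :
    IntegrableOn (fun y : ℝ => (y : ℂ) ^ (Complex.I * (δ : ℂ)) / ((y : ℂ) + (x : ℂ)))
      (Set.Ioc 0 1) ∧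
    Integrable (fun t : ℝ => (x : ℂ) ^ (-((κ : ℂ) + (t : ℂ) * Complex.I))
      / ((Complex.I * (δ : ℂ) + (κ : ℂ) + (t : ℂ) * Complex.I)
        * Complex.sin (↑Real.pi * ((κ : ℂ) + (t : ℂ) * Complex.I)))) ∧
    ∫ y in (0 : ℝ)..1, (y : ℂ) ^ (Complex.I * (δ : ℂ)) / ((y : ℂ) + (x : ℂ))
      = (1 / 2) * ∫ t : ℝ, (x : ℂ) ^ (-((κ : ℂ) + (t : ℂ) * Complex.I))
          / ((Complex.I * (δ : ℂ) + (κ : ℂ) + (t : ℂ) * Complex.I)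
            * Complex.sin (↑Real.pi * ((κ : ℂ) + (t : ℂ) * Complex.I))) := by
  refine ⟨conj1 x δ hx, conj2 x δ κ hx hκ0 hκ1, ?_⟩
  rw [intervalIntegral.integral_of_le zero_le_one]
  have step1 : (∫ y in Set.Ioc (0:ℝ) 1, (y : ℂ) ^ (Complex.I * (δ : ℂ)) / ((y : ℂ) + (x : ℂ)))
      = ∫ y in Set.Ioc (0:ℝ) 1, ∫ t : ℝ,
          (y : ℂ) ^ (Complex.I * (δ:ℂ) + (κ:ℂ) + (t:ℂ) * Complex.I - 1)
            * ((1/2 : ℂ) * (x:ℂ) ^ (-((κ:ℂ) + (t:ℂ) * Complex.I))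
              / Complex.sin ((π:ℂ) * ((κ:ℂ) + (t:ℂ) * Complex.I))) :=
    setIntegral_congr_fun measurableSet_Ioc (fun y hy => inner_y x δ κ hx hκ0 hκ1 hy)
  rw [step1]
  rw [integral_integral_swap (G_integrable x δ κ hx hκ0 hκ1)]
  have step2 : ∀ t : ℝ, (∫ y in Set.Ioc (0:ℝ) 1,
        (y : ℂ) ^ (Complex.I * (δ:ℂ) + (κ:ℂ) + (t:ℂ) * Complex.I - 1)
          * ((1/2 : ℂ) * (x:ℂ) ^ (-((κ:ℂ) + (t:ℂ) * Complex.I))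
            / Complex.sin ((π:ℂ) * ((κ:ℂ) + (t:ℂ) * Complex.I))))
      = (1/2 : ℂ) * ((x : ℂ) ^ (-((κ : ℂ) + (t : ℂ) * Complex.I))
          / ((Complex.I * (δ : ℂ) + (κ : ℂ) + (t : ℂ) * Complex.I)
            * Complex.sin ((π:ℂ) * ((κ : ℂ) + (t : ℂ) * Complex.I)))) := by
    intro t
    rw [integral_mul_const, inner_t δ κ hκ0 t, ← div_div]
    ring
  simp_rw [step2]
  rw [integral_const_mul]
end
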